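/- arXiv:1410.4158 — 7 statements merged into one kernel-verified Lean document; each statement's English description precedes it below -/
import Mathlib

section
/- Let S ⊆ ℝⁿ be a nonempty compact set and f : S → ℝ be lower semi-continuous. Then the convex hull of the epigraph of f (viewing f as +∞ outside S) is a closed subset of ℝⁿ × ℝ. -/
/-!
By Carathéodory, a point of the convex hull of the epigraph in `ℝⁿ × ℝ` is a convex combination
of `n + 2` points `(yᵢ, tᵢ)` with `yᵢ ∈ S` and `f yᵢ ≤ tᵢ`, so the hull is the image of the
epigraph of `(w, y) ↦ ∑ wᵢ f(yᵢ)` on the compact set `Δ × Sⁿ⁺²` under `(w, y, t) ↦ (∑ wᵢ yᵢ, t)`.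
That weighted sum is lower semicontinuous because the weights are nonnegative, so this epigraph is
closed, and the map is proper since `Δ × Sⁿ⁺²` is compact; hence the image is closed.
-/

open Filter Topology Set

theorem LowerSemicontinuousWithinAt.fst_mul {α : Type*} [TopologicalSpace α] {f : α → ℝ}
    {s : Set α} {y : α} (hf : LowerSemicontinuousWithinAt f s y) {w : ℝ} (hw : 0 ≤ w) :
    LowerSemicontinuousWithinAt (fun q : ℝ × α => q.1 * f q.2) (Ici 0 ×ˢ s) (w, y) := by
  intro c hc
  set ε := w * f y - c
  have hε : 0 < ε := sub_pos.mpr hc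
  set δ := ε / (2 * (w + 1))
  have hδ : 0 < δ := by positivity
  have hwδ : w * δ ≤ ε / 2 := by
    rw [mul_div_assoc', div_le_div_iff₀ (by positivity) two_pos]; nlinarith
  have hf_near : ∀ᶠ q in 𝓝[Ici 0 ×ˢ s] (w, y), f y - δ < f q.2 :=
    hf.comp continuousWithinAt_snd (fun _ hq => hq.2) _ (sub_lt_self _ hδ)
  have hw_near : ∀ᶠ q in 𝓝[Ici 0 ×ˢ s] (w, y), w * (f y - δ) - ε / 2 < q.1 * (f y - δ) :=
    ((continuous_fst.mul continuous_const).tendsto (w, y)).mono_left nhdsWithin_le_nhds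
      |>.eventually (eventually_gt_nhds (sub_lt_self _ (half_pos hε)))
  filter_upwards [hf_near, hw_near, self_mem_nhdsWithin] with q hfq hwq hq
  calc c = w * f y - ε := by ring
    _ ≤ w * (f y - δ) - ε / 2 := by linarith
    _ < q.1 * (f y - δ) := hwq
    _ ≤ q.1 * f q.2 := mul_le_mul_of_nonneg_left hfq.le hq.1

theorem LowerSemicontinuousOn.sum_mul_comp {α ι : Type*} [TopologicalSpace α] [Fintype ι]
    {f : α → ℝ} {s : Set α} (hf : LowerSemicontinuousOn f s) :
    LowerSemicontinuousOn (fun q : (ι → ℝ) × (ι → α) => ∑ i, q.1 i * f (q.2 i))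
      (Ici 0 ×ˢ univ.pi fun _ => s) := by
  refine lowerSemicontinuousOn_sum fun i _ => ?_
  intro q hq
  have hmaps : MapsTo (fun q : (ι → ℝ) × (ι → α) => (q.1 i, q.2 i))
      (Ici 0 ×ˢ univ.pi fun _ => s) (Ici 0 ×ˢ s) :=
    fun q hq => ⟨hq.1 i, hq.2 i trivial⟩
  exact (LowerSemicontinuousWithinAt.fst_mul (hf _ (hq.2 i trivial)) (hq.1 i)).comp
    (g := fun q : (ι → ℝ) × (ι → α) => (q.1 i, q.2 i)) (by fun_prop) hmaps

theorem IsCompact.isClosed_image_epigraph {X Y γ : Type*} [TopologicalSpace X]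
    [TopologicalSpace Y] [T2Space Y] [TopologicalSpace γ] [LinearOrder γ] [ClosedIciTopology γ]
    {K : Set X} (hK : IsCompact K) {g : X → γ} (hg : LowerSemicontinuousOn g K) {h : X → Y}
    (hh : ContinuousOn h K) :
    IsClosed (Prod.map h id '' {q : X × γ | q.1 ∈ K ∧ g q.1 ≤ q.2}) := by
  have : CompactSpace K := isCompact_iff_compactSpace.mp hK
  have hΦ : IsProperMap (Prod.map (K.domRestrict h) (id : γ → γ)) :=
    hh.domRestrict.isProperMap.prodMap isProperMap_id
  have hC : IsClosed {q : K × γ | K.domRestrict g q.1 ≤ q.2} :=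
    lowerSemicontinuous_iff_isClosed_epigraph.mp (lowerSemicontinuous_restrict_iff.mpr hg)
  have hepi : {q : X × γ | q.1 ∈ K ∧ g q.1 ≤ q.2} =
      Prod.map Subtype.val id '' {q : K × γ | K.domRestrict g q.1 ≤ q.2} := by
    ext ⟨x, t⟩
    simp [Set.domRestrict, and_comm]
  rw [hepi, image_image]
  exact hΦ.isClosedMap _ hC

theorem exists_stdSimplex_of_mem_convexHull {𝕜 V ι : Type*} [Field 𝕜] [LinearOrder 𝕜]
    [IsStrictOrderedRing 𝕜] [AddCommGroup V] [Module 𝕜 V] [FiniteDimensional 𝕜 V] [Fintype ι]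
    (hι : Module.finrank 𝕜 V + 1 ≤ Fintype.card ι) {s : Set V} {x : V}
    (hx : x ∈ convexHull 𝕜 s) :
    ∃ w ∈ stdSimplex 𝕜 ι, ∃ z : ι → V, (∀ i, z i ∈ s) ∧ ∑ i, w i • z i = x := by
  obtain ⟨κ, _, z, w, hzs, hz, hw₀, hw₁, hwz⟩ := eq_pos_convex_span_of_mem_convexHull hx
  obtain ⟨x₀, hx₀⟩ := convexHull_nonempty_iff.mp ⟨x, hx⟩
  have hκ : Fintype.card κ ≤ Fintype.card ι :=
    (hz.card_le_finrank_succ.trans (by gcongr; exact Submodule.finrank_le _)).trans hι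
  obtain ⟨e⟩ := Function.Embedding.nonempty_of_card_le hκ
  refine ⟨Function.extend e w 0, ⟨fun j => ?_, ?_⟩, Function.extend e z (fun _ => x₀),
    fun j => ?_, ?_⟩
  · by_cases hj : ∃ i, e i = j
    · obtain ⟨i, rfl⟩ := hj
      simpa [e.injective.extend_apply] using (hw₀ i).le
    · simp [Function.extend_apply' _ _ _ hj]
  · rw [← hw₁]
    refine (Fintype.sum_of_injective e e.injective _ _ (fun j hj => ?_) (fun i => ?_)).symm
    · simp [Function.extend_apply' _ _ _ hj]
    · simp [e.injective.extend_apply]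
  · by_cases hj : ∃ i, e i = j
    · obtain ⟨i, rfl⟩ := hj
      simpa [e.injective.extend_apply] using hzs (mem_range_self i)
    · simpa [Function.extend_apply' _ _ _ hj] using hx₀
  · rw [← hwz]
    refine (Fintype.sum_of_injective e e.injective _ _ (fun j hj => ?_) (fun i => ?_)).symm
    · simp [Function.extend_apply' _ _ _ hj]
    · simp [e.injective.extend_apply]

theorem convexHull_epigraph_eq_image {𝕜 V ι : Type*} [Field 𝕜] [LinearOrder 𝕜]
    [IsStrictOrderedRing 𝕜] [AddCommGroup V] [Module 𝕜 V] [FiniteDimensional 𝕜 V] [Fintype ι]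
    (hι : Module.finrank 𝕜 V + 2 ≤ Fintype.card ι) (S : Set V) (f : V → 𝕜) :
    convexHull 𝕜 {p : V × 𝕜 | p.1 ∈ S ∧ f p.1 ≤ p.2} =
      Prod.map (fun q : (ι → 𝕜) × (ι → V) => ∑ i, q.1 i • q.2 i) id ''
        {q | q.1 ∈ stdSimplex 𝕜 ι ×ˢ univ.pi (fun _ => S) ∧ ∑ i, q.1.1 i * f (q.1.2 i) ≤ q.2} := by
  ext ⟨x, t⟩
  constructor
  · intro hxt
    obtain ⟨w, hw, z, hz, hwz⟩ :=
      exists_stdSimplex_of_mem_convexHull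
        (by rw [Module.finrank_prod, Module.finrank_self]; omega) hxt
    have hx := congrArg Prod.fst hwz
    have ht := congrArg Prod.snd hwz
    simp only [Prod.fst_sum, Prod.snd_sum, Prod.smul_fst, Prod.smul_snd, smul_eq_mul] at hx ht
    refine ⟨((w, fun i => (z i).1), t), ⟨⟨hw, fun i _ => (hz i).1⟩, ?_⟩, ?_⟩
    · calc ∑ i, w i * f (z i).1 ≤ ∑ i, w i * (z i).2 :=
            Finset.sum_le_sum fun i _ => mul_le_mul_of_nonneg_left (hz i).2 (hw.1 i)
        _ = t := ht
    · exact Prod.ext hx rfl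
  · rintro ⟨⟨⟨w, y⟩, s⟩, ⟨⟨hw, hy⟩, hle⟩, hxt⟩
    simp only [Prod.map, id, Prod.mk.injEq] at hxt hle
    obtain ⟨rfl, rfl⟩ := hxt
    set c := s - ∑ i, w i * f (y i)
    refine mem_convexHull_of_exists_fintype w (fun i => (y i, f (y i) + c)) hw.1 hw.2
      (fun i => ⟨hy i trivial, by simp only; linarith⟩) ?_
    ext
    · simp [Prod.fst_sum]
    · simp [Prod.snd_sum, mul_add, Finset.sum_add_distrib, ← Finset.sum_mul, hw.2, c]

theorem closed_convexHull_epigraph_general (n : ℕ) (S : Set (Fin n → ℝ)) (f : (Fin n → ℝ) → ℝ)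
    (hScomp : IsCompact S) (hf : LowerSemicontinuousOn f S) :
    IsClosed (convexHull ℝ {p : (Fin n → ℝ) × ℝ | p.1 ∈ S ∧ f p.1 ≤ p.2}) := by
  have hK : IsCompact (stdSimplex ℝ (Fin (n + 2)) ×ˢ univ.pi fun _ : Fin (n + 2) => S) :=
    (isCompact_stdSimplex ℝ _).prod (isCompact_univ_pi fun _ => hScomp)
  rw [convexHull_epigraph_eq_image (ι := Fin (n + 2)) (by simp) S f]
  exact hK.isClosed_image_epigraph
    (hf.sum_mul_comp.mono (prod_mono (fun w hw => hw.1) subset_rfl)) (by fun_prop)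

/-- For `S ⊆ ℝⁿ` nonempty compact and `f` lower semicontinuous on `S`,
the convex hull of the epigraph `{(x,t) : x ∈ S, f x ≤ t}` is closed. -/
theorem closed_convexHull_epigraph (n : ℕ) (S : Set (Fin n → ℝ)) (f : (Fin n → ℝ) → ℝ)
    (hS : S.Nonempty) (hScomp : IsCompact S) (hf : LowerSemicontinuousOn f S) :
    IsClosed (convexHull ℝ {p : (Fin n → ℝ) × ℝ | p.1 ∈ S ∧ f p.1 ≤ p.2}) :=
  closed_convexHull_epigraph_general n S f hScomp hf
end

section
/- Let S ⊆ ℝⁿ be a nonempty compact set, f : S → ℝ lower semi-continuous, and f̂ : conv(S) → ℝ the convex envelope of f (the largest closed convex function majorized by f). For any c ∈ ℝⁿ, if x is an extreme point of the set argmin_{y ∈ conv(S)} (f̂(y) + cᵀy), then x ∈ S and f(x) = f̂(x). -/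
/-!
Since `f` is lower semicontinuous on the compact set `S`, the convex hull of its epigraph is
closed: by Carathéodory its points are the combinations of `dim + 2` points of `S` with
`∑ wⱼ f(pⱼ) ≤ τ`, and these form a closed set in a compact space of weights and points. Its lower
boundary is then a closed convex minorant of `f`, so `f̂ x ≥ ∑ wⱼ f(pⱼ)` for some convex
combination `x = ∑ wⱼ pⱼ` of points of `S`. Averaged over the `pⱼ`, the objective `f̂ + cᵀ·` is
then at most its value at `x`; if `x` is a minimizer, so is every `pⱼ` of positive weight, and if
`x` is an extreme minimizer, every such `pⱼ` equals `x`. Hence `x ∈ S` and `f x ≤ f̂ x ≤ f x`.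
-/

/-- `g` is the convex envelope of `f` on `S`: the largest closed (lower semicontinuous)
convex function on `conv S` majorized by `f` on `S`. -/
def IsConvexEnvelopeOn {E : Type*} [NormedAddCommGroup E] [NormedSpace ℝ E]
    (S : Set E) (f g : E → ℝ) : Prop :=
  ConvexOn ℝ (convexHull ℝ S) g ∧
  LowerSemicontinuousOn g (convexHull ℝ S) ∧
  (∀ x ∈ S, g x ≤ f x) ∧
  ∀ h : E → ℝ, ConvexOn ℝ (convexHull ℝ S) h → LowerSemicontinuousOn h (convexHull ℝ S) →
    (∀ x ∈ S, h x ≤ f x) → ∀ x ∈ convexHull ℝ S, h x ≤ g x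

open Set Filter Topology Matrix

section Semicontinuity

variable {α : Type*} [TopologicalSpace α] {s : Set α} {x : α}

theorem ContinuousWithinAt.mul_lowerSemicontinuousWithinAt {u v : α → ℝ}
    (hu : ContinuousWithinAt u s x) (hv : LowerSemicontinuousWithinAt v s x)
    (hu₀ : ∀ z ∈ s, 0 ≤ u z) (hv₀ : ∀ z ∈ s, 0 ≤ v z) (hx : x ∈ s) :
    LowerSemicontinuousWithinAt (fun z => u z * v z) s x := by
  intro y hy
  rcases lt_or_ge y 0 with hy₀ | hy₀
  · exact eventually_nhdsWithin_of_forall fun z hz =>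
      hy₀.trans_le (mul_nonneg (hu₀ z hz) (hv₀ z hz))
  have hvx : 0 < v x := pos_of_mul_pos_right (hy₀.trans_lt hy) (hu₀ x hx)
  obtain ⟨a, hya, hau⟩ := exists_between ((div_lt_iff₀ hvx).2 hy)
  have ha : 0 < a := (div_nonneg hy₀ hvx.le).trans_lt hya
  have hyv : y / a < v x := by
    rw [div_lt_iff₀ ha, mul_comm]
    exact (div_lt_iff₀ hvx).1 hya
  filter_upwards [hu.eventually (lt_mem_nhds hau), hv _ hyv, self_mem_nhdsWithin]
    with z hzu hzv hz
  calc y = a * (y / a) := (mul_div_cancel₀ y ha.ne').symm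
    _ < a * v z := mul_lt_mul_of_pos_left hzv ha
    _ ≤ u z * v z := mul_le_mul_of_nonneg_right hzu.le (hv₀ z hz)

theorem ContinuousOn.mul_lowerSemicontinuousOn {u v : α → ℝ}
    (hu : ContinuousOn u s) (hv : LowerSemicontinuousOn v s)
    (hu₀ : ∀ z ∈ s, 0 ≤ u z) (hv₀ : ∀ z ∈ s, 0 ≤ v z) :
    LowerSemicontinuousOn (fun z => u z * v z) s := fun x hx =>
  (hu x hx).mul_lowerSemicontinuousWithinAt (hv x hx) hu₀ hv₀ hx

end Semicontinuity

theorem isClosed_of_forall_isCompact_inter_snd_le {X : Type*} [TopologicalSpace X] [T2Space X]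
    {C : Set (X × ℝ)} (hC : ∀ t, IsCompact (C ∩ {q | q.2 ≤ t})) : IsClosed C := by
  refine isClosed_of_closure_subset fun q hq => ?_
  have hU : IsOpen {r : X × ℝ | r.2 < q.2 + 1} := isOpen_lt continuous_snd continuous_const
  have hq' : q ∈ closure (C ∩ {r | r.2 ≤ q.2 + 1}) := by
    refine closure_mono ?_ (hU.inter_closure ⟨lt_add_one q.2, hq⟩)
    exact fun r ⟨hr, hrC⟩ => ⟨hrC, show r.2 ≤ _ from le_of_lt hr⟩
  rw [(hC _).isClosed.closure_eq] at hq'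
  exact hq'.1

section LowerBoundary

variable {X : Type*} {C : Set (X × ℝ)} {m : ℝ} {x : X} {t : ℝ}

noncomputable def lowerBoundary (C : Set (X × ℝ)) (x : X) : ℝ :=
  sInf {t | (x, t) ∈ C}

theorem lowerBoundary_le (hCm : ∀ q ∈ C, m ≤ q.2) (h : (x, t) ∈ C) :
    lowerBoundary C x ≤ t :=
  csInf_le ⟨m, fun _ hs => hCm _ hs⟩ h

theorem mk_lowerBoundary_mem [TopologicalSpace X] (hCm : ∀ q ∈ C, m ≤ q.2)
    (hC : IsClosed C) (hx : x ∈ Prod.fst '' C) : (x, lowerBoundary C x) ∈ C := by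
  obtain ⟨⟨y, t⟩, hq, rfl⟩ := hx
  exact (hC.preimage (Continuous.prodMk_right y)).csInf_mem ⟨t, hq⟩ ⟨m, fun _ hs => hCm _ hs⟩

theorem convexOn_lowerBoundary [TopologicalSpace X] [AddCommGroup X] [Module ℝ X] {D : Set X}
    (hCm : ∀ q ∈ C, m ≤ q.2) (hC : IsClosed C) (hCconv : Convex ℝ C) (hD : Convex ℝ D)
    (hDC : D ⊆ Prod.fst '' C) : ConvexOn ℝ D (lowerBoundary C) := by
  refine ⟨hD, fun y hy z hz a b ha hb hab => ?_⟩
  have hmem := hCconv (mk_lowerBoundary_mem hCm hC (hDC hy))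
    (mk_lowerBoundary_mem hCm hC (hDC hz)) ha hb hab
  rw [Prod.smul_mk, Prod.smul_mk, Prod.mk_add_mk] at hmem
  exact lowerBoundary_le hCm hmem

theorem lowerSemicontinuousOn_lowerBoundary [TopologicalSpace X] [T2Space X] {D : Set X}
    (hCm : ∀ q ∈ C, m ≤ q.2) (hC : ∀ t, IsCompact (C ∩ {q | q.2 ≤ t}))
    (hDC : D ⊆ Prod.fst '' C) : LowerSemicontinuousOn (lowerBoundary C) D := by
  intro x _ t ht
  have hA : IsClosed (Prod.fst '' (C ∩ {q | q.2 ≤ t})) :=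
    ((hC t).image continuous_fst).isClosed
  have hxA : x ∉ Prod.fst '' (C ∩ {q | q.2 ≤ t}) := by
    rintro ⟨⟨y, s⟩, ⟨hq, hst⟩, rfl⟩
    exact ht.not_ge ((lowerBoundary_le hCm hq).trans hst)
  filter_upwards [mem_nhdsWithin_of_mem_nhds (hA.isOpen_compl.mem_nhds hxA),
    self_mem_nhdsWithin] with z hzA hzD
  by_contra! hz
  exact hzA ⟨_, ⟨mk_lowerBoundary_mem hCm (isClosed_of_forall_isCompact_inter_snd_le hC)
    (hDC hzD), hz⟩, rfl⟩

end LowerBoundary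

theorem le_sum_mul_of_mem_stdSimplex {ι : Type*} [Fintype ι] {w a : ι → ℝ} {m : ℝ}
    (hw : w ∈ stdSimplex ℝ ι) (ha : ∀ j, m ≤ a j) : m ≤ ∑ j, w j * a j :=
  calc m = ∑ j, w j * m := by rw [← Finset.sum_mul, hw.2, one_mul]
    _ ≤ ∑ j, w j * a j :=
      Finset.sum_le_sum fun j _ => mul_le_mul_of_nonneg_left (ha j) (hw.1 j)

theorem sum_mul_eq_of_forall_pos_eq {ι : Type*} [Fintype ι] {w a : ι → ℝ} {b : ℝ}
    (hw : w ∈ stdSimplex ℝ ι) (ha : ∀ j, 0 < w j → a j = b) : ∑ j, w j * a j = b :=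
  calc ∑ j, w j * a j = ∑ j, w j * b := Finset.sum_congr rfl fun j _ => by
        rcases (hw.1 j).eq_or_lt with h | h
        · rw [← h, zero_mul, zero_mul]
        · rw [ha j h]
    _ = b := by rw [← Finset.sum_mul, hw.2, one_mul]

theorem exists_fin_combination_of_mem_convexHull {V : Type*} [AddCommGroup V] [Module ℝ V]
    [FiniteDimensional ℝ V] {s : Set V} {x : V} {N : ℕ} (hN : Module.finrank ℝ V + 1 ≤ N)
    (hx : x ∈ convexHull ℝ s) :
    ∃ w ∈ stdSimplex ℝ (Fin N), ∃ p : Fin N → V, (∀ j, p j ∈ s) ∧ ∑ j, w j • p j = x := by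
  classical
  obtain ⟨ι, _, z, w, hzs, hz, hw₀, hw₁, hzx⟩ := eq_pos_convex_span_of_mem_convexHull hx
  have hcard : Fintype.card ι ≤ Fintype.card (Fin N) := by
    have := Submodule.finrank_le (vectorSpan ℝ (range z))
    have := hz.card_le_finrank_succ
    simp only [Fintype.card_fin]
    omega
  obtain ⟨e⟩ := Function.Embedding.nonempty_of_card_le hcard
  obtain ⟨i₀⟩ : Nonempty ι := by
    by_contra h
    simp [not_nonempty_iff.1 h] at hw₁
  have hw' : ∀ j ∉ range e, Function.extend e w 0 j = 0 := fun j hj =>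
    Function.extend_apply' _ _ _ hj
  refine ⟨Function.extend e w 0, ⟨fun j => ?_, ?_⟩, Function.extend e z fun _ => z i₀,
    fun j => ?_, ?_⟩
  · by_cases hj : j ∈ range e
    · obtain ⟨i, rfl⟩ := hj
      rw [e.injective.extend_apply]
      exact (hw₀ i).le
    · rw [hw' j hj]
  · rw [← hw₁]
    exact (Fintype.sum_of_injective e e.injective w _ hw' fun i =>
      (e.injective.extend_apply _ _ i).symm).symm
  · by_cases hj : j ∈ range e
    · obtain ⟨i, rfl⟩ := hj
      rw [e.injective.extend_apply]
      exact hzs (mem_range_self i)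
    · rw [Function.extend_apply' _ _ _ hj]
      exact hzs (mem_range_self i₀)
  · rw [← hzx]
    refine (Fintype.sum_of_injective e e.injective _ _ (fun j hj => ?_) fun i => ?_).symm
    · rw [hw' j hj, zero_smul]
    · rw [e.injective.extend_apply, e.injective.extend_apply]

section Epigraph

variable {E : Type*} {S : Set E} {f : E → ℝ}

def epigraphOn (S : Set E) (f : E → ℝ) : Set (E × ℝ) :=
  {q | q.1 ∈ S ∧ f q.1 ≤ q.2}

theorem mem_convexHull_epigraphOn_iff [AddCommGroup E] [Module ℝ E] [FiniteDimensional ℝ E]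
    {N : ℕ} (hN : Module.finrank ℝ E + 2 ≤ N) {y : E} {τ : ℝ} :
    (y, τ) ∈ convexHull ℝ (epigraphOn S f) ↔ ∃ w ∈ stdSimplex ℝ (Fin N), ∃ p : Fin N → E,
      (∀ j, p j ∈ S) ∧ ∑ j, w j • p j = y ∧ ∑ j, w j * f (p j) ≤ τ := by
  constructor
  · intro h
    obtain ⟨w, hw, r, hr, hry⟩ := exists_fin_combination_of_mem_convexHull (N := N)
      (by rw [Module.finrank_prod, Module.finrank_self]; omega) h
    refine ⟨w, hw, fun j => (r j).1, fun j => (hr j).1,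
      by simpa [Prod.fst_sum] using congrArg Prod.fst hry, ?_⟩
    calc ∑ j, w j * f (r j).1 ≤ ∑ j, w j * (r j).2 :=
          Finset.sum_le_sum fun j _ => mul_le_mul_of_nonneg_left (hr j).2 (hw.1 j)
      _ = τ := by simpa [Prod.snd_sum] using congrArg Prod.snd hry
  · rintro ⟨w, hw, p, hp, rfl, hle⟩
    set d := τ - ∑ j, w j * f (p j)
    have hmem := (convex_convexHull ℝ (epigraphOn S f)).sum_mem (t := Finset.univ)
      (fun j _ => hw.1 j) hw.2 (z := fun j => (p j, f (p j) + d))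
      fun j _ => subset_convexHull ℝ _ ⟨hp j, le_add_of_nonneg_right (sub_nonneg.2 hle)⟩
    convert hmem using 1
    ext <;> simp [Prod.fst_sum, Prod.snd_sum, mul_add, Finset.sum_add_distrib, ← Finset.sum_mul,
      hw.2, d]

theorem lowerSemicontinuousOn_sum_mul [TopologicalSpace E] {ι : Type*} [Fintype ι] {m : ℝ}
    (hf : LowerSemicontinuousOn f S) (hm : ∀ y ∈ S, m ≤ f y) :
    LowerSemicontinuousOn (fun z : (ι → ℝ) × (ι → E) => ∑ j, z.1 j * f (z.2 j))
      (stdSimplex ℝ ι ×ˢ univ.pi fun _ => S) := by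
  -- shifting by `m` makes both factors of every term nonnegative
  have hsplit : (fun z : (ι → ℝ) × (ι → E) => ∑ j, z.1 j * f (z.2 j)) =
      fun z => ∑ j, z.1 j * (f (z.2 j) - m) + m * ∑ j, z.1 j := by
    ext z
    simp only [mul_sub, Finset.sum_sub_distrib, ← Finset.sum_mul]
    ring
  rw [hsplit]
  refine (lowerSemicontinuousOn_sum fun j _ => ?_).add
    (Continuous.continuousOn (by fun_prop)).lowerSemicontinuousOn
  refine ContinuousOn.mul_lowerSemicontinuousOn (by fun_prop) ?_ (fun z hz => hz.1.1 j)
    fun z hz => sub_nonneg.2 (hm _ (hz.2 j (mem_univ j)))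
  exact (hf.comp (by fun_prop) fun z hz => hz.2 j (mem_univ j)).add lowerSemicontinuousOn_const

variable [NormedAddCommGroup E] [NormedSpace ℝ E]

theorem isCompact_convexHull_epigraphOn_inter [FiniteDimensional ℝ E] (hS : IsCompact S)
    (hf : LowerSemicontinuousOn f S) (t : ℝ) :
    IsCompact (convexHull ℝ (epigraphOn S f) ∩ {q | q.2 ≤ t}) := by
  obtain ⟨m, hm⟩ := hf.bddBelow_of_isCompact hS
  set N := Module.finrank ℝ E + 2
  set K : Set ((Fin N → ℝ) × (Fin N → E)) := stdSimplex ℝ (Fin N) ×ˢ univ.pi fun _ => S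
  have hK : IsCompact K := (isCompact_stdSimplex ℝ (Fin N)).prod (isCompact_univ_pi fun _ => hS)
  set G :=
    {q : ((Fin N → ℝ) × (Fin N → E)) × ℝ | q.1 ∈ K ∧ ∑ j, q.1.1 j * f (q.1.2 j) ≤ q.2}
  have hG : IsClosed G := (lowerSemicontinuousOn_iff_isClosed_epigraph hK.isClosed).1
    (lowerSemicontinuousOn_sum_mul hf fun y hy => hm ⟨y, hy, rfl⟩)
  have hGt : IsCompact (G ∩ {q | q.2 ≤ t}) :=
    (hK.prod (isCompact_Icc (a := m) (b := t))).of_isClosed_subset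
      (hG.inter (isClosed_le continuous_snd continuous_const))
      fun q ⟨⟨hqK, hq⟩, hqt⟩ => ⟨hqK, (le_sum_mul_of_mem_stdSimplex hqK.1
        fun j => hm ⟨_, hqK.2 j (mem_univ j), rfl⟩).trans hq, hqt⟩
  have himage : convexHull ℝ (epigraphOn S f) ∩ {q | q.2 ≤ t} =
      (fun q => (∑ j, q.1.1 j • q.1.2 j, q.2)) '' (G ∩ {q | q.2 ≤ t}) := by
    ext ⟨y, τ⟩
    constructor
    · rintro ⟨hmem, hτ⟩
      obtain ⟨w, hw, p, hp, rfl, hle⟩ := (mem_convexHull_epigraphOn_iff le_rfl).1 hmem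
      exact ⟨((w, p), τ), ⟨⟨⟨hw, fun j _ => hp j⟩, hle⟩, hτ⟩, rfl⟩
    · rintro ⟨⟨⟨w, p⟩, τ'⟩, ⟨⟨⟨hw, hp⟩, hle⟩, hτ⟩, h⟩
      obtain ⟨rfl, rfl⟩ := Prod.mk.inj h
      exact ⟨(mem_convexHull_epigraphOn_iff le_rfl).2
        ⟨w, hw, p, fun j => hp j (mem_univ j), rfl, hle⟩, hτ⟩
  rw [himage]
  exact hGt.image (by fun_prop)

end Epigraph

theorem IsConvexEnvelopeOn.exists_sum_mul_le {E : Type*} [NormedAddCommGroup E]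
    [NormedSpace ℝ E] [FiniteDimensional ℝ E] {S : Set E} {f g : E → ℝ} (hS : IsCompact S)
    (hf : LowerSemicontinuousOn f S) (hg : IsConvexEnvelopeOn S f g) {x : E}
    (hx : x ∈ convexHull ℝ S) :
    ∃ w ∈ stdSimplex ℝ (Fin (Module.finrank ℝ E + 2)),
      ∃ p : Fin (Module.finrank ℝ E + 2) → E,
        (∀ j, p j ∈ S) ∧ ∑ j, w j • p j = x ∧ ∑ j, w j * f (p j) ≤ g x := by
  obtain ⟨m, hm⟩ := hf.bddBelow_of_isCompact hS
  set C := convexHull ℝ (epigraphOn S f)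
  have hCm : ∀ q ∈ C, m ≤ q.2 := by
    rintro ⟨y, τ⟩ hq
    obtain ⟨w, hw, p, hp, -, hle⟩ := (mem_convexHull_epigraphOn_iff le_rfl).1 hq
    exact (le_sum_mul_of_mem_stdSimplex hw fun j => hm ⟨_, hp j, rfl⟩).trans hle
  have hSC : convexHull ℝ S ⊆ Prod.fst '' C := by
    intro y hy
    obtain ⟨w, hw, p, hp, hpy⟩ := exists_fin_combination_of_mem_convexHull
      (N := Module.finrank ℝ E + 2) (by omega) hy
    exact ⟨_, (mem_convexHull_epigraphOn_iff le_rfl).2 ⟨w, hw, p, hp, hpy, le_rfl⟩, rfl⟩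
  have hslab := isCompact_convexHull_epigraphOn_inter hS hf
  have hC := isClosed_of_forall_isCompact_inter_snd_le hslab
  have hle : lowerBoundary C x ≤ g x :=
    hg.2.2.2 _
      (convexOn_lowerBoundary hCm hC (convex_convexHull ℝ _) (convex_convexHull ℝ S) hSC)
      (lowerSemicontinuousOn_lowerBoundary hCm hslab hSC)
      (fun y hy => lowerBoundary_le hCm (subset_convexHull ℝ _ ⟨hy, le_rfl⟩)) x hx
  obtain ⟨w, hw, p, hp, hpx, hfp⟩ :=
    (mem_convexHull_epigraphOn_iff le_rfl).1 (mk_lowerBoundary_mem hCm hC (hSC hx))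
  exact ⟨w, hw, p, hp, hpx, hfp.trans hle⟩

section ExtremeMinimizer

variable {V ι : Type*} [Fintype ι] {w : ι → ℝ} {p : ι → V} {x : V} {D : Set V} {φ : V → ℝ}

theorem IsMinOn.isMinOn_of_sum_mul_le (hx : IsMinOn φ D x) (hw : w ∈ stdSimplex ℝ ι)
    (hp : ∀ j, p j ∈ D) (hle : ∑ j, w j * φ (p j) ≤ φ x) {j : ι} (hj : 0 < w j) :
    IsMinOn φ D (p j) := by
  have hpj : φ (p j) ≤ φ x := by
    by_contra! h
    have hlt : ∑ i, w i * φ x < ∑ i, w i * φ (p i) :=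
      Finset.sum_lt_sum
        (fun i _ => mul_le_mul_of_nonneg_left (isMinOn_iff.1 hx _ (hp i)) (hw.1 i))
        ⟨j, Finset.mem_univ j, mul_lt_mul_of_pos_left h hj⟩
    rw [← Finset.sum_mul, hw.2, one_mul] at hlt
    exact hle.not_gt hlt
  exact isMinOn_iff.2 fun z hz => hpj.trans (isMinOn_iff.1 hx z hz)

variable [AddCommGroup V] [Module ℝ V]

theorem Convex.eq_of_mem_extremePoints_of_sum_smul_eq {T : Set V} (hT : Convex ℝ T)
    (hx : x ∈ T.extremePoints ℝ) (hw : w ∈ stdSimplex ℝ ι) (hp : ∀ j, 0 < w j → p j ∈ T)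
    (hpx : ∑ j, w j • p j = x) {j : ι} (hj : 0 < w j) : p j = x := by
  classical
  by_contra hne
  set J := Finset.univ.filter fun i => 0 < w i ∧ p i ≠ x
  have hjJ : j ∈ J := Finset.mem_filter.2 ⟨Finset.mem_univ j, hj, hne⟩
  have hJ : ∑ i ∈ J, w i • (p i - x) = 0 := by
    rw [Finset.sum_filter_of_ne fun i _ hi => ?_]
    · simp [smul_sub, Finset.sum_sub_distrib, ← Finset.sum_smul, hw.2, hpx]
    · obtain ⟨hwi, hpi⟩ := smul_ne_zero_iff.1 hi
      exact ⟨(hw.1 i).lt_of_ne' hwi, sub_ne_zero.1 hpi⟩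
  have hJpos : 0 < ∑ i ∈ J, w i := Finset.sum_pos' (fun i _ => hw.1 i) ⟨j, hjJ, hj⟩
  have hcenter : J.centerMass w p = x := by
    rw [Finset.centerMass, inv_smul_eq_iff₀ hJpos.ne']
    simpa [smul_sub, Finset.sum_sub_distrib, ← Finset.sum_smul, sub_eq_zero] using hJ
  have hmem : J.centerMass w p ∈ T \ {x} :=
    (hT.mem_extremePoints_iff_convex_sdiff.1 hx).2.centerMass_mem (fun i _ => hw.1 i) hJpos
      fun i hi => ⟨hp i (Finset.mem_filter.1 hi).2.1, (Finset.mem_filter.1 hi).2.2⟩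
  exact hmem.2 hcenter

theorem ConvexOn.convex_setOf_isMinOn (hφ : ConvexOn ℝ D φ) :
    Convex ℝ {y ∈ D | IsMinOn φ D y} := by
  intro y hy z hz a b ha hb hab
  have h := hφ.convex_le (φ y) ⟨hy.1, le_rfl⟩ ⟨hz.1, isMinOn_iff.1 hz.2 y hy.1⟩ ha hb hab
  exact ⟨h.1, isMinOn_iff.2 fun v hv => h.2.trans (isMinOn_iff.1 hy.2 v hv)⟩

theorem ConvexOn.eq_of_mem_extremePoints_setOf_isMinOn (hφ : ConvexOn ℝ D φ)
    (hx : x ∈ {y ∈ D | IsMinOn φ D y}.extremePoints ℝ) (hw : w ∈ stdSimplex ℝ ι)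
    (hp : ∀ j, p j ∈ D) (hpx : ∑ j, w j • p j = x) (hle : ∑ j, w j * φ (p j) ≤ φ x)
    {j : ι} (hj : 0 < w j) : p j = x :=
  hφ.convex_setOf_isMinOn.eq_of_mem_extremePoints_of_sum_smul_eq hx hw
    (fun i hi => ⟨hp i, hx.1.2.isMinOn_of_sum_mul_le hw hp hle hi⟩) hpx hj

end ExtremeMinimizer

theorem extreme_point_of_argmin_envelope_general (n : ℕ) (S : Set (Fin n → ℝ))
    (f g : (Fin n → ℝ) → ℝ) (hScomp : IsCompact S)
    (hf : LowerSemicontinuousOn f S) (hg : IsConvexEnvelopeOn S f g)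
    (c : Fin n → ℝ) (x : Fin n → ℝ)
    (hx : x ∈ Set.extremePoints ℝ
      {y ∈ convexHull ℝ S | ∀ z ∈ convexHull ℝ S,
        g y + ∑ i, c i * y i ≤ g z + ∑ i, c i * z i}) :
    x ∈ S ∧ f x = g x := by
  obtain ⟨w, hw, p, hpS, hpx, hfp⟩ := hg.exists_sum_mul_le hScomp hf hx.1.1
  have hφ : ConvexOn ℝ (convexHull ℝ S) fun y => g y + c ⬝ᵥ y :=
    hg.1.add ((dotProductBilin ℝ ℝ c).convexOn (convex_convexHull ℝ S))
  have hφp : ∑ j, w j * (g (p j) + c ⬝ᵥ p j) ≤ g x + c ⬝ᵥ x := by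
    have hgf : ∑ j, w j * g (p j) ≤ ∑ j, w j * f (p j) := Finset.sum_le_sum fun j _ =>
      mul_le_mul_of_nonneg_left (hg.2.2.1 _ (hpS j)) (hw.1 j)
    have hlin : ∑ j, w j * c ⬝ᵥ p j = c ⬝ᵥ x := by
      simp [← hpx, dotProduct_sum, dotProduct_smul]
    simp only [mul_add, Finset.sum_add_distrib, hlin]
    linarith
  have hpx' : ∀ j, 0 < w j → p j = x := fun j => hφ.eq_of_mem_extremePoints_setOf_isMinOn hx hw
    (fun j => subset_convexHull ℝ S (hpS j)) hpx hφp
  obtain ⟨j, -, hj⟩ := Finset.exists_lt_of_sum_lt (by simp [hw.2] : ∑ j, (0 : ℝ) < ∑ j, w j)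
  have hxS : x ∈ S := hpx' j hj ▸ hpS j
  refine ⟨hxS, le_antisymm ?_ (hg.2.2.1 x hxS)⟩
  rwa [← sum_mul_eq_of_forall_pos_eq hw fun j hj => congrArg f (hpx' j hj)]

/-- at any extreme point `x` of `argmin_{y ∈ conv S} (f̂(y) + cᵀy)`,
one has `x ∈ S` and `f x = f̂ x`. -/
theorem extreme_point_of_argmin_envelope (n : ℕ) (S : Set (Fin n → ℝ))
    (f g : (Fin n → ℝ) → ℝ) (hS : S.Nonempty) (hScomp : IsCompact S)
    (hf : LowerSemicontinuousOn f S) (hg : IsConvexEnvelopeOn S f g)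
    (c : Fin n → ℝ) (x : Fin n → ℝ)
    (hx : x ∈ Set.extremePoints ℝ
      {y ∈ convexHull ℝ S | ∀ z ∈ convexHull ℝ S,
        g y + ∑ i, c i * y i ≤ g z + ∑ i, c i * z i}) :
    x ∈ S ∧ f x = g x :=
  extreme_point_of_argmin_envelope_general n S f g hScomp hf hg c x hx
end

section
/- Let C ⊆ ℝᴺ be a nonempty compact set, and let w be a random vector drawn uniformly from the unit sphere in ℝᴺ. Then, with probability one, the linear function x ↦ wᵀx has a unique minimizer over C. -/
/-!
The function `innerInf C w = min_{y ∈ C} ⟪w, y⟫` is Lipschitz and positively homogeneous. If `x`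
minimizes `⟪w, ·⟫` over `C`, then `innerInf C ≤ ⟪·, x⟫` with equality at `w`, so wherever
`innerInf C` is differentiable at `w` its derivative is `⟪·, x⟫`, which determines `x`. By
Rademacher's theorem the points of non-differentiability form a Lebesgue-null set; it is a cone,
and `toSphere` measures a subset of the sphere by the cone over it, so its trace on the sphere
is null too.
-/

open MeasureTheory Metric Set
open scoped RealInnerProductSpace NNReal

theorem LipschitzWith.ciInf {α ι : Type*} [PseudoMetricSpace α] [Nonempty ι]
    {f : ι → α → ℝ} {K : ℝ≥0} (hf : ∀ i, LipschitzWith K (f i))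
    (hbdd : ∀ x, BddBelow (range fun i => f i x)) : LipschitzWith K fun x => ⨅ i, f i x :=
  LipschitzWith.of_le_add_mul K fun x y => sub_le_iff_le_add.mp <| le_ciInf fun i =>
    sub_le_iff_le_add.mpr <| (ciInf_le (hbdd x) i).trans ((hf i).le_add_mul x y)

theorem DifferentiableAt.of_smul_of_posHomogeneous {E F : Type*} [NormedAddCommGroup E]
    [NormedSpace ℝ E] [NormedAddCommGroup F] [NormedSpace ℝ F] {f : E → F}
    (hf : ∀ r : ℝ, 0 < r → ∀ x, f (r • x) = r • f x) {r : ℝ} (hr : 0 < r) {x : E}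
    (h : DifferentiableAt ℝ f (r • x)) : DifferentiableAt ℝ f x := by
  have hf_eq : f = fun y => r⁻¹ • f (r • y) := by
    funext y
    rw [hf r hr, smul_smul, inv_mul_cancel₀ hr.ne', one_smul]
  rw [hf_eq]
  exact (h.comp x (differentiableAt_id.const_smul r)).const_smul r⁻¹

namespace MeasureTheory.Measure

theorem toSphere_preimage_eq_zero {E : Type*} [NormedAddCommGroup E] [NormedSpace ℝ E]
    [MeasurableSpace E] [BorelSpace E] (μ : Measure E) {T : Set E} (hT : MeasurableSet T)
    (hcone : ∀ r : ℝ, 0 < r → ∀ x ∈ T, r • x ∈ T) (hμT : μ T = 0) :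
    μ.toSphere (Subtype.val ⁻¹' T) = 0 := by
  rw [toSphere_apply' μ (measurable_subtype_coe hT), measure_mono_null ?_ hμT, mul_zero]
  rintro _ ⟨r, hr, _, ⟨x, hx, rfl⟩, rfl⟩
  exact hcone r hr.1 x hx

end MeasureTheory.Measure

section InnerInf

variable {E : Type*} [NormedAddCommGroup E] [InnerProductSpace ℝ E] {C : Set E}

noncomputable def innerInf (C : Set E) (w : E) : ℝ :=
  ⨅ y : C, ⟪w, y⟫

theorem innerInf_smul (C : Set E) {r : ℝ} (hr : 0 ≤ r) (w : E) :
    innerInf C (r • w) = r * innerInf C w := by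
  simp only [innerInf, real_inner_smul_left, Real.mul_iInf_of_nonneg hr]

theorem bddBelow_range_inner (hC : Bornology.IsBounded C) (w : E) :
    BddBelow (range fun y : C => ⟪w, (y : E)⟫) := by
  obtain ⟨R, hR⟩ := hC.exists_norm_le
  refine ⟨-(‖w‖ * R), ?_⟩
  rintro _ ⟨y, rfl⟩
  calc -(‖w‖ * R) ≤ -(‖w‖ * ‖(y : E)‖) := by gcongr; exact hR y y.2
    _ ≤ ⟪w, (y : E)⟫ := neg_le_of_abs_le (abs_real_inner_le_norm w y)

theorem innerInf_le (hC : Bornology.IsBounded C) (w : E) {y : E} (hy : y ∈ C) :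
    innerInf C w ≤ ⟪w, y⟫ :=
  ciInf_le (bddBelow_range_inner hC w) ⟨y, hy⟩

theorem innerInf_eq_of_isMinOn (hC : Bornology.IsBounded C) {w x : E} (hx : x ∈ C)
    (hmin : IsMinOn (fun y => ⟪w, y⟫) C x) : innerInf C w = ⟪w, x⟫ :=
  have : Nonempty C := ⟨⟨x, hx⟩⟩
  (innerInf_le hC w hx).antisymm (le_ciInf fun y => hmin y.2)

theorem lipschitzWith_innerInf (hC : Bornology.IsBounded C) (hne : C.Nonempty) :
    ∃ K, LipschitzWith K (innerInf C) := by
  obtain ⟨R, hR⟩ := hC.exists_norm_le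
  have : Nonempty C := hne.to_subtype
  refine ⟨R.toNNReal, LipschitzWith.ciInf (fun y => ?_) (bddBelow_range_inner hC)⟩
  have hy : (fun w : E => ⟪w, (y : E)⟫) = innerSL ℝ (y : E) := funext fun w => real_inner_comm _ _
  rw [hy]
  refine (innerSL ℝ (y : E)).lipschitz.weaken ?_
  rw [← NNReal.coe_le_coe, coe_nnnorm, innerSL_apply_norm]
  exact (hR y y.2).trans (Real.le_coe_toNNReal R)

theorem eq_innerSL_of_hasFDerivAt_innerInf (hC : Bornology.IsBounded C) {w x : E} {L : E →L[ℝ] ℝ}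
    (hx : x ∈ C) (hmin : IsMinOn (fun y => ⟪w, y⟫) C x) (hL : HasFDerivAt (innerInf C) L w) :
    L = innerSL ℝ x := by
  have hlocal : IsLocalMin (fun u => innerSL ℝ x u - innerInf C u) w := by
    refine Filter.Eventually.of_forall fun u => ?_
    simp only [innerSL_apply_apply, real_inner_comm x, innerInf_eq_of_isMinOn hC hx hmin, sub_self]
    exact sub_nonneg.mpr ((innerInf_le hC u hx).trans_eq (real_inner_comm _ _))
  exact (sub_eq_zero.mp (hlocal.hasFDerivAt_eq_zero ((innerSL ℝ x).hasFDerivAt.sub hL))).symm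

theorem existsUnique_isMinOn_inner_of_differentiableAt (hC : IsCompact C) (hne : C.Nonempty)
    {w : E} (hw : DifferentiableAt ℝ (innerInf C) w) :
    ∃! x, x ∈ C ∧ ∀ y ∈ C, ⟪w, x⟫ ≤ ⟪w, y⟫ := by
  obtain ⟨x, hx, hmin⟩ := hC.exists_isMinOn (f := fun y => ⟪w, y⟫) hne (by fun_prop)
  refine ⟨x, ⟨hx, fun y hy => hmin hy⟩, fun x' ⟨hx', hmin'⟩ => ?_⟩
  have hL := eq_innerSL_of_hasFDerivAt_innerInf hC.isBounded hx hmin hw.hasFDerivAt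
  have hL' :=
    eq_innerSL_of_hasFDerivAt_innerInf hC.isBounded hx' (isMinOn_iff.mpr hmin') hw.hasFDerivAt
  exact ext_inner_right ℝ fun v => by simpa using DFunLike.congr_fun (hL'.symm.trans hL) v

end InnerInf

/-- for a nonempty compact `C ⊆ ℝᴺ`, for almost every `w` drawn from the
uniform distribution on the unit sphere, the linear function `x ↦ ⟪w, x⟫` has a unique
minimizer over `C`. -/
theorem ae_unique_minimizer_of_random_linear (N : ℕ)
    (C : Set (EuclideanSpace ℝ (Fin N))) (hC : C.Nonempty) (hCcomp : IsCompact C) :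
    ∀ᵐ (w : sphere (0 : EuclideanSpace ℝ (Fin N)) 1)
        ∂((volume : Measure (EuclideanSpace ℝ (Fin N))).toSphere),
      ∃! x : EuclideanSpace ℝ (Fin N),
        x ∈ C ∧ ∀ y ∈ C, inner (𝕜 := ℝ) (w : EuclideanSpace ℝ (Fin N)) x ≤
          inner (𝕜 := ℝ) (w : EuclideanSpace ℝ (Fin N)) y := by
  set T := {w : EuclideanSpace ℝ (Fin N) | ¬DifferentiableAt ℝ (innerInf C) w}
  obtain ⟨K, hK⟩ := lipschitzWith_innerInf hCcomp.isBounded hC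
  have hT : volume T = 0 := ae_iff.mp hK.ae_differentiableAt
  have hcone : ∀ r : ℝ, 0 < r → ∀ w ∈ T, r • w ∈ T := fun r hr w hw h =>
    hw (h.of_smul_of_posHomogeneous (fun s hs => innerInf_smul C hs.le) hr)
  have hnull := volume.toSphere_preimage_eq_zero (measurableSet_of_differentiableAt ℝ _).compl
    hcone hT
  filter_upwards [measure_eq_zero_iff_ae_notMem.mp hnull] with w hw
  exact existsUnique_isMinOn_inner_of_differentiableAt hCcomp hC (not_not.mp hw)
end

section
/- Let M₁,…,Mₙ be nonempty compact convex sets with Mᵢ ⊆ ℝ^{nᵢ}, N = Σ nᵢ, A ∈ ℝ^{m×N}, b ∈ ℝᵐ, and suppose {x ∈ M₁×⋯×Mₙ : Ax ≤ b} is nonempty. Let w be uniform on the unit sphere of ℝᴺ. Then with probability one the problem minimize wᵀx subject to Ax ≤ b, xᵢ ∈ Mᵢ has a unique solution x, and letting J = {j : (Ax−b)ⱼ = 0} be its active set, the number of indices i for which xᵢ is not an extreme point of Mᵢ is at most |J|. -/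
/-!
For a compact set `K`, the function `h_K(w) = inf_{x ∈ K} ⟪w, x⟫` is Lipschitz, so by Rademacher's
theorem it is differentiable almost everywhere, and where it is differentiable every minimizer `x`
of `⟪w, ·⟫` on `K` equals its gradient; the set of bad directions is a null cone, so it meets the
unit sphere in a null set. A unique minimizer is an exposed, hence extreme, point of the feasible
set. At an extreme point `x`, each block `xᵢ` that is not extreme in `Mᵢ` admits a direction `vᵢ`
in which it can move both ways; if there were more such blocks than active constraints, some
nonzero combination `∑ cᵢ vᵢ` would keep all active constraints tight, and `x` could be moved both
ways along it, contradicting extremality.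
-/

open MeasureTheory Metric Set Filter Topology RealInnerProductSpace
open scoped Pointwise

section SupportFunction

variable {E : Type*} [NormedAddCommGroup E] [InnerProductSpace ℝ E]

noncomputable def infInner (K : Set E) (w : E) : ℝ := sInf ((⟪w, ·⟫) '' K)

lemma bddBelow_image_inner {K : Set E} (hK : Bornology.IsBounded K) (w : E) :
    BddBelow ((⟪w, ·⟫) '' K) :=
  ((innerSL ℝ w).lipschitz.isBounded_image hK).bddBelow

lemma infInner_le {K : Set E} (hK : Bornology.IsBounded K) (w : E) {x : E} (hx : x ∈ K) :
    infInner K w ≤ ⟪w, x⟫ :=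
  csInf_le (bddBelow_image_inner hK w) (mem_image_of_mem _ hx)

lemma infInner_eq_of_isMinOn {K : Set E} (hK : Bornology.IsBounded K) {w x : E} (hx : x ∈ K)
    (hmin : IsMinOn (⟪w, ·⟫) K x) : infInner K w = ⟪w, x⟫ :=
  (infInner_le hK w hx).antisymm <| le_csInf ⟨_, mem_image_of_mem _ hx⟩ <| by
    rintro _ ⟨z, hz, rfl⟩
    exact hmin hz

lemma lipschitzWith_infInner {K : Set E} (hK : Bornology.IsBounded K) (hKne : K.Nonempty) :
    ∃ C, LipschitzWith C (infInner K) := by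
  obtain ⟨R, hR⟩ := hK.exists_norm_le
  refine ⟨_, LipschitzWith.of_le_add_mul' R fun v u => ?_⟩
  suffices infInner K v - R * dist v u ≤ infInner K u by linarith
  refine le_csInf (hKne.image _) ?_
  rintro _ ⟨z, hz, rfl⟩
  have hvz : ⟪v - u, z⟫ ≤ R * dist v u := by
    rw [dist_eq_norm, mul_comm]
    exact (real_inner_le_norm _ _).trans (mul_le_mul_of_nonneg_left (hR z hz) (norm_nonneg _))
  have := infInner_le hK v hz
  rw [inner_sub_left] at hvz
  linarith

lemma infInner_smul (K : Set E) {a : ℝ} (ha : 0 ≤ a) (w : E) :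
    infInner K (a • w) = a * infInner K w := by
  have : (⟪a • w, ·⟫) '' K = a • ((⟪w, ·⟫) '' K) := by
    rw [← image_smul, ← image_comp]
    exact image_congr fun x _ => real_inner_smul_left _ _ _
  rw [infInner, this, Real.sInf_smul_of_nonneg ha, smul_eq_mul, infInner]

lemma differentiableAt_infInner_smul_iff {K : Set E} {a : ℝ} (ha : 0 < a) {w : E} :
    DifferentiableAt ℝ (infInner K) (a • w) ↔ DifferentiableAt ℝ (infInner K) w := by
  have scale : ∀ {a : ℝ} {w : E}, 0 < a → DifferentiableAt ℝ (infInner K) w →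
      DifferentiableAt ℝ (infInner K) (a • w) := by
    intro a w ha hd
    have hK : infInner K = fun u => a * infInner K (a⁻¹ • u) := by
      funext u
      rw [← infInner_smul K ha.le, smul_inv_smul₀ ha.ne']
    have hd' : DifferentiableAt ℝ (infInner K) (a⁻¹ • a • w) := by
      rwa [inv_smul_smul₀ ha.ne']
    rw [hK]
    exact (hd'.comp _ (differentiableAt_id.const_smul a⁻¹)).const_mul a
  refine ⟨fun hd => ?_, scale ha⟩
  simpa [inv_smul_smul₀ ha.ne'] using scale (inv_pos.2 ha) hd

-- `v ↦ ⟪x, v⟫ - infInner K v` is nonnegative and vanishes at `w`, so its derivative there is zero.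
lemma fderiv_infInner_eq_of_isMinOn {K : Set E} (hK : Bornology.IsBounded K) {w x : E}
    (hd : DifferentiableAt ℝ (infInner K) w) (hx : x ∈ K) (hmin : IsMinOn (⟪w, ·⟫) K x) :
    fderiv ℝ (infInner K) w = innerSL ℝ x := by
  have hloc : IsLocalMin (fun v => innerSL ℝ x v - infInner K v) w :=
    Eventually.of_forall fun v => by
      have := infInner_le hK v hx
      show ⟪x, w⟫ - infInner K w ≤ ⟪x, v⟫ - infInner K v
      rw [infInner_eq_of_isMinOn hK hx hmin, real_inner_comm w x, sub_self, real_inner_comm v x]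
      exact sub_nonneg.2 this
  exact (sub_eq_zero.1 (hloc.hasFDerivAt_eq_zero
    ((innerSL ℝ x).hasFDerivAt.sub hd.hasFDerivAt))).symm

lemma eq_of_isMinOn_of_differentiableAt_infInner {K : Set E} (hK : Bornology.IsBounded K)
    {w x y : E} (hd : DifferentiableAt ℝ (infInner K) w) (hx : x ∈ K) (hy : y ∈ K)
    (hxmin : IsMinOn (⟪w, ·⟫) K x) (hymin : IsMinOn (⟪w, ·⟫) K y) : x = y := by
  have h := (fderiv_infInner_eq_of_isMinOn hK hd hx hxmin).symm.trans
    (fderiv_infInner_eq_of_isMinOn hK hd hy hymin)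
  exact ext_inner_right ℝ fun v => by simpa using DFunLike.congr_fun h v

lemma mem_exposedPoints_of_isMinOn_inner {K : Set E} {w x : E} (hx : x ∈ K)
    (hmin : IsMinOn (⟪w, ·⟫) K x) (huniq : ∀ y ∈ K, IsMinOn (⟪w, ·⟫) K y → y = x) :
    x ∈ K.exposedPoints ℝ := by
  refine ⟨hx, -innerSL ℝ w, fun y hy => ⟨?_, fun hxy => huniq y hy fun z hz => ?_⟩⟩
  · simpa using hmin hy
  · have hyx : ⟪w, y⟫ ≤ ⟪w, x⟫ := by simpa using hxy
    exact hyx.trans (hmin hz)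

end SupportFunction

-- `μ.toSphere s` is a multiple of the `μ`-measure of the truncated cone `(0, 1) • s`.
lemma MeasureTheory.Measure.toSphere_preimage_coe_eq_zero {E : Type*} [NormedAddCommGroup E]
    [NormedSpace ℝ E] [MeasurableSpace E] [BorelSpace E] (μ : Measure E) {D : Set E}
    (hDm : MeasurableSet D) (hD : μ D = 0) (hcone : ∀ r : ℝ, 0 < r → ∀ x ∈ D, r • x ∈ D) :
    μ.toSphere (((↑) : sphere (0 : E) 1 → E) ⁻¹' D) = 0 := by
  rw [μ.toSphere_apply' (hDm.preimage continuous_subtype_val.measurable)]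
  refine mul_eq_zero_of_right _ (measure_mono_null ?_ hD)
  rintro _ ⟨r, hr, _, ⟨w, hw, rfl⟩, rfl⟩
  exact hcone r hr.1 w hw

theorem ae_toSphere_isMinOn_inner_unique {E : Type*} [NormedAddCommGroup E]
    [InnerProductSpace ℝ E] [FiniteDimensional ℝ E] [MeasurableSpace E] [BorelSpace E]
    (μ : Measure E) [μ.IsAddHaarMeasure] {K : Set E} (hK : Bornology.IsBounded K)
    (hKne : K.Nonempty) :
    ∀ᵐ w : sphere (0 : E) 1 ∂μ.toSphere, ∀ x ∈ K, ∀ y ∈ K,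
      IsMinOn (⟪(w : E), ·⟫) K x → IsMinOn (⟪(w : E), ·⟫) K y → x = y := by
  obtain ⟨C, hC⟩ := lipschitzWith_infInner hK hKne
  have hnull : μ.toSphere
      (((↑) : sphere (0 : E) 1 → E) ⁻¹' {w | ¬DifferentiableAt ℝ (infInner K) w}) = 0 :=
    μ.toSphere_preimage_coe_eq_zero (measurableSet_of_differentiableAt ℝ _).compl
      (ae_iff.1 hC.ae_differentiableAt)
      fun r hr _ hw => mt (differentiableAt_infInner_smul_iff hr).1 hw
  filter_upwards [measure_eq_zero_iff_ae_notMem.1 hnull] with w hw x hx y hy hxmin hymin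
  exact eq_of_isMinOn_of_differentiableAt_infInner hK (not_not.1 hw) hx hy hxmin hymin

section ExtremePoints

variable {E : Type*} [AddCommGroup E] [Module ℝ E] {C : Set E} {x : E}

lemma eq_zero_of_mem_extremePoints_of_eventually_add_smul_mem (hx : x ∈ C.extremePoints ℝ)
    {u : E} (hu : ∀ᶠ t in 𝓝 (0 : ℝ), x + t • u ∈ C) : u = 0 := by
  have hsym : ∀ᶠ t in 𝓝[≠] (0 : ℝ), x + t • u ∈ C ∧ x + (-t) • u ∈ C :=
    nhdsWithin_le_nhds (hu.and ((continuous_neg.tendsto' 0 0 neg_zero).eventually hu))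
  obtain ⟨t, ⟨hplus, hminus⟩, ht⟩ := (hsym.and self_mem_nhdsWithin).exists
  have hmid : x ∈ openSegment ℝ (x + t • u) (x + (-t) • u) :=
    ⟨1 / 2, 1 / 2, by norm_num, by norm_num, by norm_num, by module⟩
  have htu : t = 0 ∨ u = 0 := by
    simpa using ((mem_extremePoints.1 hx).2 _ hplus _ hminus hmid).1
  exact htu.resolve_left ht

lemma exists_ne_zero_eventually_add_smul_mem (hC : Convex ℝ C) (hx : x ∈ C)
    (hxe : x ∉ C.extremePoints ℝ) : ∃ v ≠ 0, ∀ᶠ t in 𝓝 (0 : ℝ), x + t • v ∈ C := by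
  obtain ⟨y₁, hy₁, y₂, hy₂, ⟨a, b, ha, hb, hab, rfl⟩, hne⟩ : ∃ y₁ ∈ C, ∃ y₂ ∈ C,
      x ∈ openSegment ℝ y₁ y₂ ∧ ¬(y₁ = x ∧ y₂ = x) := by
    simpa [mem_extremePoints, hx] using hxe
  refine ⟨y₁ - y₂, sub_ne_zero.2 fun h => hne ?_, ?_⟩
  · subst h
    rw [← add_smul, hab, one_smul]
    exact ⟨rfl, rfl⟩
  · filter_upwards [Ioo_mem_nhds (neg_lt_zero.2 ha) hb] with t ht
    convert hC hy₁ hy₂ (by linarith [ht.1]) (by linarith [ht.2])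
      (by linarith : a + t + (b - t) = 1) using 1
    module

end ExtremePoints

lemma LinearMap.exists_ne_zero_forall_eq_zero_of_ncard_lt {K ι ρ : Type*} [Field K] [Finite ι]
    [Finite ρ] (f : (ι → K) →ₗ[K] ρ → K) {S : Set ι} {J : Set ρ} (h : J.ncard < S.ncard) :
    ∃ c : ι → K, c ≠ 0 ∧ (∀ i ∉ S, c i = 0) ∧ ∀ j ∈ J, f c j = 0 := by
  have : Fintype S := Fintype.ofFinite S
  have : Fintype J := Fintype.ofFinite J
  let g := funLeft K K ((↑) : J → ρ) ∘ₗ f ∘ₗ Function.ExtendByZero.linearMap K ((↑) : S → ι)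
  have hrank : Module.finrank K (J → K) < Module.finrank K (S → K) := by
    simpa only [Module.finrank_fintype_fun_eq_card, ← Nat.card_eq_fintype_card,
      Nat.card_coe_set_eq] using h
  obtain ⟨c, hc, hc0⟩ := (Submodule.ne_bot_iff _).1 (ker_ne_bot_of_finrank_lt (f := g) hrank)
  refine ⟨Function.extend (↑) c 0, fun hext => hc0 ?_, fun i hi => ?_, fun j hj => ?_⟩
  · ext s
    simpa [Subtype.val_injective.extend_apply] using congrFun hext s
  · exact Function.extend_apply' _ _ _ fun ⟨s, hs⟩ => hi (hs ▸ s.2)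
  · exact congrFun hc ⟨j, hj⟩

section Blocks

variable {ι ρ : Type*} [Fintype ι] {κ : ι → Type*} [∀ i, Fintype (κ i)]
  {M : ∀ i, Set (κ i → ℝ)} {A : Matrix ρ (Σ i, κ i) ℝ} {b : ρ → ℝ}

variable (M A b) in
def feasibleSet : Set (EuclideanSpace ℝ (Σ i, κ i)) :=
  {y | (∀ j, A.mulVec y j ≤ b j) ∧ ∀ i, (fun k => y ⟨i, k⟩) ∈ M i}

variable (A b) in
lemma isCompact_feasibleSet (hM : ∀ i, IsCompact (M i)) : IsCompact (feasibleSet M A b) := by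
  have hblocks : IsCompact {y : EuclideanSpace ℝ (Σ i, κ i) | ∀ i, (fun k => y ⟨i, k⟩) ∈ M i} := by
    have : {y : EuclideanSpace ℝ (Σ i, κ i) | ∀ i, (fun k => y ⟨i, k⟩) ∈ M i} =
        (fun f => WithLp.toLp 2 (Sigma.uncurry f)) '' univ.pi M := by
      ext y
      refine ⟨fun hy => ⟨fun i k => y ⟨i, k⟩, fun i _ => hy i, rfl⟩, ?_⟩
      rintro ⟨f, hf, rfl⟩ i
      exact hf i trivial
    rw [this]
    exact (isCompact_univ_pi hM).image <| (PiLp.continuous_toLp 2 _).comp <|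
      continuous_pi fun s => (continuous_apply s.2).comp (continuous_apply s.1)
  have hrows : IsClosed {y : EuclideanSpace ℝ (Σ i, κ i) | ∀ j, A.mulVec y j ≤ b j} := by
    simp only [ofPred_forall]
    exact isClosed_iInter fun j => isClosed_le (by fun_prop) continuous_const
  exact hblocks.inter_left hrows

lemma eventually_add_smul_mem_feasibleSet [Finite ρ] {x u : EuclideanSpace ℝ (Σ i, κ i)}
    (hx : x ∈ feasibleSet M A b) (hactive : ∀ j, A.mulVec x j = b j → A.mulVec u j = 0)
    (hblock : ∀ i, ∀ᶠ t in 𝓝 (0 : ℝ), (fun k => x ⟨i, k⟩) + t • (fun k => u ⟨i, k⟩) ∈ M i) :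
    ∀ᶠ t in 𝓝 (0 : ℝ), x + t • u ∈ feasibleSet M A b := by
  have hrow : ∀ j, ∀ᶠ t in 𝓝 (0 : ℝ), A.mulVec x j + t * A.mulVec u j ≤ b j := by
    intro j
    rcases (hx.1 j).eq_or_lt with hj | hj
    · exact Eventually.of_forall fun t => by rw [hactive j hj, hj, mul_zero, add_zero]
    · have : Tendsto (fun t : ℝ => A.mulVec x j + t * A.mulVec u j) (𝓝 0) (𝓝 (A.mulVec x j)) :=
        Continuous.tendsto' (by fun_prop) _ _ (by simp)
      exact (this.eventually (eventually_lt_nhds hj)).mono fun _ => le_of_lt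
  filter_upwards [eventually_all.2 hrow, eventually_all.2 hblock] with t hrow hblock
  refine ⟨fun j => ?_, hblock⟩
  simpa [Matrix.mulVec_add, Matrix.mulVec_smul] using hrow j

def blockScale (v : ∀ i, κ i → ℝ) : (ι → ℝ) →ₗ[ℝ] (Σ i, κ i) → ℝ where
  toFun c s := c s.1 * v s.1 s.2
  map_add' c c' := by ext; simp [add_mul]
  map_smul' r c := by ext; simp [mul_assoc]

theorem ncard_notMem_extremePoints_le_ncard_active [Finite ρ] (hMconv : ∀ i, Convex ℝ (M i))
    {x : EuclideanSpace ℝ (Σ i, κ i)} (hx : x ∈ (feasibleSet M A b).extremePoints ℝ) :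
    {i | (fun k => x ⟨i, k⟩) ∉ (M i).extremePoints ℝ}.ncard ≤ {j | A.mulVec x j = b j}.ncard := by
  set S := {i | (fun k => x ⟨i, k⟩) ∉ (M i).extremePoints ℝ}
  by_contra! hlt
  have hdir : ∀ i ∈ S, ∃ v ≠ 0, ∀ᶠ t in 𝓝 (0 : ℝ), (fun k => x ⟨i, k⟩) + t • v ∈ M i :=
    fun i hi => exists_ne_zero_eventually_add_smul_mem (hMconv i) (hx.1.2 i) hi
  choose! v hv0 hv using hdir
  obtain ⟨c, hc0, hcS, hcJ⟩ :=
    (A.mulVecLin ∘ₗ blockScale v).exists_ne_zero_forall_eq_zero_of_ncard_lt hlt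
  set u := WithLp.toLp 2 (blockScale v c)
  have hu : u ≠ 0 := by
    obtain ⟨i, hi⟩ := Function.ne_iff.1 hc0
    have hiS : i ∈ S := by_contra fun h => hi (hcS i h)
    obtain ⟨k, hk⟩ := Function.ne_iff.1 (hv0 i hiS)
    intro h0
    exact mul_ne_zero hi hk (congrArg (· ⟨i, k⟩) h0)
  refine hu (eq_zero_of_mem_extremePoints_of_eventually_add_smul_mem hx
    (eventually_add_smul_mem_feasibleSet hx.1 (fun j hj => hcJ j hj) fun i => ?_))
  by_cases hiS : i ∈ S
  · filter_upwards [(tendsto_id.mul_const (c i)).eventually (zero_mul (c i) ▸ hv i hiS)] with t ht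
    convert ht using 2
    ext k
    simp [u, blockScale, mul_assoc]
  · filter_upwards with t
    convert hx.1.2 i using 1
    ext k
    simp [u, blockScale, hcS i hiS]

end Blocks

theorem ae_unique_solution_extreme_blocks_general (n m : ℕ) (d : Fin n → ℕ)
    (M : ∀ i : Fin n, Set (Fin (d i) → ℝ))
    (hMcomp : ∀ i, IsCompact (M i))
    (hMconv : ∀ i, Convex ℝ (M i))
    (A : Matrix (Fin m) ((i : Fin n) × Fin (d i)) ℝ) (b : Fin m → ℝ)
    (hfeas : ∃ x : EuclideanSpace ℝ ((i : Fin n) × Fin (d i)),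
      (∀ j, A.mulVec x j ≤ b j) ∧ ∀ i, (fun j => x ⟨i, j⟩) ∈ M i) :
    ∀ᵐ (w : sphere (0 : EuclideanSpace ℝ ((i : Fin n) × Fin (d i))) 1)
        ∂((volume : Measure (EuclideanSpace ℝ ((i : Fin n) × Fin (d i)))).toSphere),
      ∃ x : EuclideanSpace ℝ ((i : Fin n) × Fin (d i)),
        ((∀ j, A.mulVec x j ≤ b j) ∧ ∀ i, (fun j => x ⟨i, j⟩) ∈ M i) ∧
        (∀ y ∈ {y : EuclideanSpace ℝ ((i : Fin n) × Fin (d i)) |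
            (∀ j, A.mulVec y j ≤ b j) ∧ ∀ i, (fun j => y ⟨i, j⟩) ∈ M i},
          inner (𝕜 := ℝ) (w : EuclideanSpace ℝ ((i : Fin n) × Fin (d i))) x ≤
            inner (𝕜 := ℝ) (w : EuclideanSpace ℝ ((i : Fin n) × Fin (d i))) y) ∧
        (∀ y ∈ {y : EuclideanSpace ℝ ((i : Fin n) × Fin (d i)) |
            (∀ j, A.mulVec y j ≤ b j) ∧ ∀ i, (fun j => y ⟨i, j⟩) ∈ M i},
          (∀ z ∈ {z : EuclideanSpace ℝ ((i : Fin n) × Fin (d i)) |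
              (∀ j, A.mulVec z j ≤ b j) ∧ ∀ i, (fun j => z ⟨i, j⟩) ∈ M i},
            inner (𝕜 := ℝ) (w : EuclideanSpace ℝ ((i : Fin n) × Fin (d i))) y ≤
              inner (𝕜 := ℝ) (w : EuclideanSpace ℝ ((i : Fin n) × Fin (d i))) z) → y = x) ∧
        {i : Fin n | (fun j => x ⟨i, j⟩) ∉ Set.extremePoints ℝ (M i)}.ncard ≤
          {j : Fin m | A.mulVec x j = b j}.ncard := by
  have hF := isCompact_feasibleSet A b hMcomp
  filter_upwards [ae_toSphere_isMinOn_inner_unique volume hF.isBounded hfeas] with w hw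
  obtain ⟨x, hxF, hxmin⟩ : ∃ x ∈ feasibleSet M A b, IsMinOn (⟪w.1, ·⟫) (feasibleSet M A b) x :=
    hF.exists_isMinOn hfeas (by fun_prop)
  have huniq : ∀ y ∈ feasibleSet M A b, IsMinOn (⟪w.1, ·⟫) (feasibleSet M A b) y → y = x :=
    fun y hy hymin => hw y hy x hxF hymin hxmin
  refine ⟨x, hxF, hxmin, huniq, ?_⟩
  exact ncard_notMem_extremePoints_le_ncard_active hMconv
    (exposedPoints_subset_extremePoints (mem_exposedPoints_of_isMinOn_inner hxF hxmin huniq))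

/-- minimizing a uniformly random linear functional over
`{x : Ax ≤ b, xᵢ ∈ Mᵢ}` (with `Mᵢ` nonempty compact convex, feasible set nonempty)
almost surely gives a unique solution `x`, and the number of blocks `i` at which `xᵢ`
is not an extreme point of `Mᵢ` is at most the number `|J|` of active constraints at `x`. -/
theorem ae_unique_solution_extreme_blocks (n m : ℕ) (d : Fin n → ℕ)
    (M : ∀ i : Fin n, Set (Fin (d i) → ℝ))
    (hMne : ∀ i, (M i).Nonempty) (hMcomp : ∀ i, IsCompact (M i))
    (hMconv : ∀ i, Convex ℝ (M i))
    (A : Matrix (Fin m) ((i : Fin n) × Fin (d i)) ℝ) (b : Fin m → ℝ)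
    (hfeas : ∃ x : EuclideanSpace ℝ ((i : Fin n) × Fin (d i)),
      (∀ j, A.mulVec x j ≤ b j) ∧ ∀ i, (fun j => x ⟨i, j⟩) ∈ M i) :
    ∀ᵐ (w : sphere (0 : EuclideanSpace ℝ ((i : Fin n) × Fin (d i))) 1)
        ∂((volume : Measure (EuclideanSpace ℝ ((i : Fin n) × Fin (d i)))).toSphere),
      ∃ x : EuclideanSpace ℝ ((i : Fin n) × Fin (d i)),
        ((∀ j, A.mulVec x j ≤ b j) ∧ ∀ i, (fun j => x ⟨i, j⟩) ∈ M i) ∧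
        (∀ y ∈ {y : EuclideanSpace ℝ ((i : Fin n) × Fin (d i)) |
            (∀ j, A.mulVec y j ≤ b j) ∧ ∀ i, (fun j => y ⟨i, j⟩) ∈ M i},
          inner (𝕜 := ℝ) (w : EuclideanSpace ℝ ((i : Fin n) × Fin (d i))) x ≤
            inner (𝕜 := ℝ) (w : EuclideanSpace ℝ ((i : Fin n) × Fin (d i))) y) ∧
        (∀ y ∈ {y : EuclideanSpace ℝ ((i : Fin n) × Fin (d i)) |
            (∀ j, A.mulVec y j ≤ b j) ∧ ∀ i, (fun j => y ⟨i, j⟩) ∈ M i},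
          (∀ z ∈ {z : EuclideanSpace ℝ ((i : Fin n) × Fin (d i)) |
              (∀ j, A.mulVec z j ≤ b j) ∧ ∀ i, (fun j => z ⟨i, j⟩) ∈ M i},
            inner (𝕜 := ℝ) (w : EuclideanSpace ℝ ((i : Fin n) × Fin (d i))) y ≤
              inner (𝕜 := ℝ) (w : EuclideanSpace ℝ ((i : Fin n) × Fin (d i))) z) → y = x) ∧
        {i : Fin n | (fun j => x ⟨i, j⟩) ∉ Set.extremePoints ℝ (M i)}.ncard ≤
          {j : Fin m | A.mulVec x j = b j}.ncard :=
  ae_unique_solution_extreme_blocks_general n m d M hMcomp hMconv A b hfeas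
end

section
/- For the problem minimize Σᵢ₌₁ⁿ g(xᵢ) subject to Σᵢ xᵢ ≤ B with xᵢ ∈ [0,1], where g(x) = 1 for x < 1 and g(1) = 0, and 0 < B < 1: the optimal value of the original problem is p* = n, the optimal value of the convexified problem (with ĝ(x) = 1−x, constraints Σxᵢ ≤ B, 0 ≤ x ≤ 1) is p̂ = n − B, and hence p* − p̂ = B, which tends to the bound ρ(g)·(number of constraints) = 1 as B → 1. In particular the duality-gap bound p* ≤ p̂ + ρ(g) is tight. -/
/-! The budget `B < 1` keeps every coordinate below `1`, the only point where `g` vanishes, so every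
feasible point of the original problem costs `n`. The convexified objective `∑ (1 - xᵢ)` only sees
`∑ xᵢ`, so its minimum `n - B` is attained by spending the whole budget, e.g. at `xᵢ = B / n`. -/

open Finset

variable {ι : Type*} [Fintype ι]

def BudgetFeasible (B : ℝ) (x : ι → ℝ) : Prop :=
  (∀ i, x i ∈ Set.Icc (0 : ℝ) 1) ∧ ∑ i, x i ≤ B

lemma BudgetFeasible.ne_one {B : ℝ} {x : ι → ℝ} (hx : BudgetFeasible B x) (hB : B < 1) (i : ι) :
    x i ≠ 1 := by
  intro hi
  have : x i ≤ ∑ j, x j := single_le_sum (fun j _ => (hx.1 j).1) (mem_univ i)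
  linarith [hx.2]

lemma sum_const_div_card {B : ℝ} (hB0 : 0 ≤ B) (hBn : B ≤ Fintype.card ι) :
    ∑ _ : ι, B / Fintype.card ι = B := by
  rcases (Nat.cast_nonneg (α := ℝ) (Fintype.card ι)).eq_or_lt with h | h
  · rw [← h] at hBn
    simp [le_antisymm hBn hB0]
  · rw [sum_const, card_univ, nsmul_eq_mul, mul_div_cancel₀ _ h.ne']

lemma budgetFeasible_const_div_card {B : ℝ} (hB0 : 0 ≤ B) (hBn : B ≤ Fintype.card ι) :
    BudgetFeasible B (fun _ : ι => B / Fintype.card ι) :=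
  ⟨fun _ => ⟨by positivity, div_le_one_of_le₀ hBn (Nat.cast_nonneg _)⟩,
    (sum_const_div_card hB0 hBn).le⟩

lemma sum_one_sub_eq_card_sub_sum (x : ι → ℝ) : ∑ i, (1 - x i) = Fintype.card ι - ∑ i, x i := by
  simp [sum_sub_distrib]

theorem primal_values_eq_singleton {B : ℝ} (hB0 : 0 ≤ B) (hB1 : B < 1) :
    {v : ℝ | ∃ x : ι → ℝ, BudgetFeasible B x ∧ v = ∑ i, (if x i = 1 then (0 : ℝ) else 1)} =
      {(Fintype.card ι : ℝ)} := by
  ext v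
  constructor
  · rintro ⟨x, hx, rfl⟩
    simp [hx.ne_one hB1]
  · rintro rfl
    exact ⟨0, ⟨fun _ => ⟨le_rfl, zero_le_one⟩, by simpa using hB0⟩, by simp⟩

theorem isLeast_convexified_values {B : ℝ} (hB0 : 0 ≤ B) (hBn : B ≤ Fintype.card ι) :
    IsLeast {v : ℝ | ∃ x : ι → ℝ, BudgetFeasible B x ∧ v = ∑ i, (1 - x i)}
      (Fintype.card ι - B) := by
  constructor
  · exact ⟨_, budgetFeasible_const_div_card hB0 hBn,
      by rw [sum_one_sub_eq_card_sub_sum, sum_const_div_card hB0 hBn]⟩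
  · rintro v ⟨x, hx, rfl⟩
    rw [sum_one_sub_eq_card_sub_sum]
    linarith [hx.2]

/-- for the problem `min Σ g(xᵢ) s.t. Σ xᵢ ≤ B, xᵢ ∈ [0,1]` with
`g = 1` on `[0,1)`, `g(1) = 0` and `0 < B < 1`: the optimal value is `p* = n`, the
convexified optimal value is `p̂ = n − B`, so `p* − p̂ = B`, and the bound
`p* ≤ p̂ + ρ(g) = p̂ + 1` is tight as `B → 1`. -/
theorem tight_example (n : ℕ) (hn : 0 < n) (B : ℝ) (hB0 : 0 < B) (hB1 : B < 1) :
    sInf {v : ℝ | ∃ x : Fin n → ℝ,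
        ((∀ i, x i ∈ Set.Icc (0 : ℝ) 1) ∧ ∑ i, x i ≤ B) ∧
        v = ∑ i, (if x i = 1 then (0 : ℝ) else 1)} = n ∧
    sInf {v : ℝ | ∃ x : Fin n → ℝ,
        ((∀ i, x i ∈ Set.Icc (0 : ℝ) 1) ∧ ∑ i, x i ≤ B) ∧
        v = ∑ i, (1 - x i)} = n - B ∧
    (n : ℝ) - (n - B) = B ∧ (n : ℝ) ≤ (n - B) + 1 := by
  have hn1 : (1 : ℝ) ≤ n := by exact_mod_cast hn
  refine ⟨?_, ?_, by ring, by linarith⟩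
  · have := primal_values_eq_singleton (ι := Fin n) hB0.le hB1
    rw [Fintype.card_fin] at this
    exact (congrArg sInf this).trans (csInf_singleton _)
  · have := isLeast_convexified_values (ι := Fin n) hB0.le (by rw [Fintype.card_fin]; linarith)
    rw [Fintype.card_fin] at this
    exact this.csInf_eq
end

section
/- The convex envelope of f(x) = min(x₁,…,xₙ) on [0,1]ⁿ is f̂(x) = max(Σᵢ xᵢ − (n−1), 0), and ρ(f) = (n−1)/n. -/
open Set

lemma sum_smul_update_zero_apply {ι : Type*} [Fintype ι] [DecidableEq ι] (w c : ι → ℝ) (j : ι) :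
    (∑ i, w i • Function.update c i 0) j = (∑ i, w i - w j) * c j := by
  simp only [Finset.sum_apply, Pi.smul_apply, smul_eq_mul, Function.update_apply]
  rw [← Finset.sum_erase_add _ _ (Finset.mem_univ j), if_pos rfl, mul_zero, add_zero,
    Finset.sum_congr rfl fun i hi ↦ by rw [if_neg (Finset.ne_of_mem_erase hi).symm],
    ← Finset.sum_mul, Finset.sum_erase_eq_sub (Finset.mem_univ j)]

variable {n : ℕ}

lemma convexOn_max_sum_sub {s : Set (Fin n → ℝ)} (hs : Convex ℝ s) (c : ℝ) :
    ConvexOn ℝ s fun x ↦ max (∑ i, x i - c) 0 := by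
  have hsum : ConvexOn ℝ s fun x : Fin n → ℝ ↦ ∑ i, x i :=
    ⟨hs, fun x _ y _ a b _ _ _ ↦ le_of_eq (by simp [Finset.sum_add_distrib, Finset.mul_sum])⟩
  exact (hsum.add_const (-c)).sup (convexOn_const 0 hs)

lemma sum_le_sub_one_add_apply {x : Fin n → ℝ} (hx : x ∈ Icc 0 1) (i : Fin n) :
    ∑ j, x j ≤ (n - 1) + x i := by
  rw [← Finset.add_sum_erase _ _ (Finset.mem_univ i), add_comm]
  gcongr
  calc ∑ j ∈ Finset.univ.erase i, x j ≤ (Finset.univ.erase i).card • (1 : ℝ) :=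
        Finset.sum_le_card_nsmul _ _ _ fun j _ ↦ hx.2 j
    _ = n - 1 := by simp [Finset.card_erase_of_mem, Nat.cast_pred i.pos]

lemma card_mul_iInf_le_sum [NeZero n] (x : Fin n → ℝ) : n * ⨅ i, x i ≤ ∑ i, x i := by
  simpa using
    Finset.card_nsmul_le_sum Finset.univ x _ fun i _ ↦ ciInf_le (Finite.bddBelow_range x) i

lemma mem_convexHull_setOf_exists_apply_eq_zero {x : Fin n → ℝ} (hx : x ∈ Icc 0 1)
    (hs : ∑ i, x i ≤ n - 1) :
    x ∈ convexHull ℝ {p ∈ Icc (0 : Fin n → ℝ) 1 | ∃ i, p i = 0} := by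
  have hx0 (j : Fin n) : 0 ≤ x j := hx.1 j
  have hx1 (j : Fin n) : x j ≤ 1 := hx.2 j
  have hd : 1 ≤ n - ∑ j, x j := by linarith
  set w : Fin n → ℝ := fun i ↦ (1 - x i) / (n - ∑ j, x j)
  set c : Fin n → ℝ := fun j ↦ x j / (1 - w j)
  have hw (j : Fin n) : 0 ≤ w j := div_nonneg (by linarith [hx1 j]) (by linarith)
  have hxw (j : Fin n) : x j ≤ 1 - w j := by
    linarith [div_le_self (by linarith [hx1 j] : 0 ≤ 1 - x j) hd]
  have hw_sum : ∑ i, w i = 1 := by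
    rw [← Finset.sum_div, Finset.sum_sub_distrib]
    simp only [Finset.sum_const, Finset.card_univ, Fintype.card_fin, nsmul_eq_mul, mul_one]
    exact div_self (by linarith)
  have hc_mem : c ∈ Icc 0 1 := ⟨fun j ↦ div_nonneg (hx0 j) ((hx0 j).trans (hxw j)),
    fun j ↦ div_le_one_of_le₀ (hxw j) ((hx0 j).trans (hxw j))⟩
  have hx_eq : ∑ i, w i • Function.update c i 0 = x := by
    funext j
    rw [sum_smul_update_zero_apply, hw_sum]
    rcases ((hx0 j).trans (hxw j)).eq_or_lt with h | h
    · simp [← h, le_antisymm (h ▸ hxw j) (hx0 j)]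
    · exact mul_div_cancel₀ _ h.ne'
  rw [← hx_eq]
  refine (convex_convexHull ℝ _).sum_mem (fun i _ ↦ hw i) hw_sum fun i _ ↦ subset_convexHull ℝ _ ?_
  rw [← pi_univ_Icc] at hc_mem ⊢
  exact ⟨(update_mem_pi_iff_of_mem hc_mem).2 fun _ ↦ by simp, i, Function.update_self ..⟩

lemma eq_smul_one_add_sum_smul_update_one (x : Fin n → ℝ) :
    x = (∑ i, x i - (n - 1)) • 1 + ∑ i, (1 - x i) • Function.update (1 : Fin n → ℝ) i 0 := by
  funext j
  rw [Pi.add_apply, sum_smul_update_zero_apply, Finset.sum_sub_distrib]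
  simp only [Pi.smul_apply, Pi.one_apply, smul_eq_mul, Finset.sum_const, Finset.card_univ,
    Fintype.card_fin, nsmul_eq_mul]
  ring

theorem ConvexOn.le_max_sum_sub_of_nonpos_on_faces {h : (Fin n → ℝ) → ℝ}
    (hconv : ConvexOn ℝ (Icc 0 1) h) (hface : ∀ p ∈ Icc (0 : Fin n → ℝ) 1, (∃ i, p i = 0) → h p ≤ 0)
    (hone : h 1 ≤ 1) {x : Fin n → ℝ} (hx : x ∈ Icc 0 1) :
    h x ≤ max (∑ i, x i - (n - 1)) 0 := by
  rcases le_or_gt (∑ i, x i) (n - 1) with hs | hs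
  · obtain ⟨y, hy, hxy⟩ := hconv.exists_ge_of_mem_convexHull (fun _ hp ↦ hp.1)
      (mem_convexHull_setOf_exists_apply_eq_zero hx hs)
    exact hxy.trans <| (hface y hy.1 hy.2).trans (le_max_right _ _)
  · have hx1 (j : Fin n) : x j ≤ 1 := hx.2 j
    have hv_mem (i : Fin n) : Function.update (1 : Fin n → ℝ) i 0 ∈ Icc 0 1 := by
      rw [← pi_univ_Icc]
      exact (update_mem_pi_iff_of_mem fun _ _ ↦ by simp).2 fun _ ↦ by simp
    let w : Option (Fin n) → ℝ := fun o ↦ o.elim (∑ i, x i - (n - 1)) fun i ↦ 1 - x i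
    let v : Option (Fin n) → Fin n → ℝ := fun o ↦ o.elim 1 fun i ↦ Function.update 1 i 0
    have hw_sum : ∑ o, w o = 1 := by
      simp [w, Fintype.sum_option, Finset.sum_sub_distrib]
    have hjensen := hconv.map_sum_le (t := Finset.univ) (w := w) (p := v)
      (fun o _ ↦ o.rec (by simp [w]; linarith) fun i ↦ by simp [w, hx1 i])
      hw_sum (fun o _ ↦ o.rec (by simp [v]) hv_mem)
    simp only [Fintype.sum_option, w, v, Option.elim, smul_eq_mul] at hjensen
    rw [← eq_smul_one_add_sum_smul_update_one] at hjensen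
    calc h x ≤ _ := hjensen
      _ ≤ (∑ i, x i - (n - 1)) * 1 + ∑ i, (1 - x i) * 0 := by
        gcongr with i
        · linarith [hx1 i]
        · exact hface _ (hv_mem i) ⟨i, Function.update_self ..⟩
      _ = max (∑ i, x i - (n - 1)) 0 := by simp [hs.le]

lemma max_sum_sub_le_iInf [NeZero n] {x : Fin n → ℝ} (hx : x ∈ Icc 0 1) :
    max (∑ i, x i - (n - 1)) 0 ≤ ⨅ i, x i :=
  le_ciInf fun i ↦ max_le (by linarith [sum_le_sub_one_add_apply hx i]) (hx.1 i)

lemma iInf_sub_max_sum_sub_le [NeZero n] {x : Fin n → ℝ} (hx : x ∈ Icc 0 1) :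
    (⨅ i, x i) - max (∑ i, x i - (n - 1)) 0 ≤ (n - 1) / n := by
  have hn : (1 : ℝ) ≤ n := by exact_mod_cast NeZero.one_le
  have hmin_le_one : ⨅ i, x i ≤ 1 := (ciInf_le (Finite.bddBelow_range x) 0).trans (hx.2 0)
  rw [le_div_iff₀ (by linarith)]
  -- Average the bounds `m` and `(n - 1) * (1 - m)` on the gap with weights `(n - 1) / n`, `1 / n`.
  nlinarith [le_max_left (∑ i, x i - (n - 1)) 0, le_max_right (∑ i, x i - (n - 1)) 0,
    card_mul_iInf_le_sum x]

lemma isGreatest_iInf_sub_max_sum_sub [NeZero n] :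
    IsGreatest ((fun x : Fin n → ℝ ↦ (⨅ i, x i) - max (∑ i, x i - (n - 1)) 0) '' Icc 0 1)
      ((n - 1) / n) := by
  have hn : (1 : ℝ) ≤ n := by exact_mod_cast NeZero.one_le
  refine ⟨⟨fun _ ↦ (n - 1) / n, ⟨fun _ ↦ ?_, fun _ ↦ ?_⟩, ?_⟩, ?_⟩
  · exact div_nonneg (by linarith) (by linarith)
  · exact div_le_one_of_le₀ (by linarith) (by linarith)
  · simp [mul_div_cancel₀ _ (show (n : ℝ) ≠ 0 by positivity)]
  · rintro _ ⟨x, hx, rfl⟩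
    exact iInf_sub_max_sum_sub_le hx

/-- the convex envelope of `min(x₁,…,xₙ)` on `[0,1]ⁿ` is
`max(Σ xᵢ − (n−1), 0)`, with nonconvexity `(n−1)/n`. -/
theorem envelope_min_n (n : ℕ) (hn : 0 < n) :
    IsConvexEnvelopeOn (Set.Icc (0 : Fin n → ℝ) 1)
      (fun x => ⨅ i, x i) (fun x => max (∑ i, x i - (n - 1)) 0) ∧
    sSup ((fun x : Fin n → ℝ => (⨅ i, x i) - max (∑ i, x i - (n - 1)) 0) ''
      Set.Icc (0 : Fin n → ℝ) 1) = (n - 1) / n := by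
  have : NeZero n := ⟨hn.ne'⟩
  refine ⟨?_, isGreatest_iInf_sub_max_sum_sub.csSup_eq⟩
  rw [IsConvexEnvelopeOn, (convex_Icc _ _).convexHull_eq]
  refine ⟨?_, (by fun_prop : Continuous _).lowerSemicontinuous.lowerSemicontinuousOn _,
    fun x hx ↦ max_sum_sub_le_iInf hx, fun h hconv _ hle x hx ↦ ?_⟩
  · exact convexOn_max_sum_sub (convex_Icc 0 1) _
  · refine hconv.le_max_sum_sub_of_nonpos_on_faces (fun p hp ⟨i, hi⟩ ↦ ?_) ?_ hx
    · exact (hle p hp).trans ((ciInf_le (Finite.bddBelow_range p) i).trans hi.le)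
    · simpa using hle 1 ⟨zero_le_one, le_rfl⟩
end

section
/- The convex envelope of f(x) = ∏ᵢ₌₁ⁿ xᵢ on [0,1]ⁿ is f̂(x) = max(Σᵢ xᵢ − (n−1), 0), and ρ(f) = ((n−1)/n)ⁿ. -/
/-!
A convex `h ≤ ∏ xᵢ` on the cube is `≤ 0` on the faces `{xᵢ = 0}` and `≤ 1` at the vertex `1`.
Write `x = 1 - d`, `s = ∑ dᵢ`, and restrict `h` to the ray `c ↦ 1 - c • d`. At `c = s⁻¹` the ray
meets the convex combination `∑ (dᵢ / s) (1 - eᵢ)` of face vertices, and at `c = (max dᵢ)⁻¹` it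
meets a face. If `s ≤ 1`, then `x` (at `c = 1`) lies between `1` and the first point, so
`h x ≤ 1 - s`; otherwise it lies between the two points, so `h x ≤ 0`. Together with the
Weierstrass inequality `∑ xᵢ - (n - 1) ≤ ∏ xᵢ` this identifies the envelope. For `ρ`, AM-GM bounds
`∏ xᵢ` by `tⁿ` with `t` the mean of the `xᵢ`, and `tⁿ - max (n t - (n - 1)) 0` is largest at
`t = (n - 1) / n`, because `tⁿ` has slope at most `n` on `[0, 1]`.
-/

open Finset

lemma mem_Icc_zero_one_iff {ι : Type*} {x : ι → ℝ} :
    x ∈ Set.Icc (0 : ι → ℝ) 1 ↔ ∀ i, 0 ≤ x i ∧ x i ≤ 1 := by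
  simp [Pi.le_def, forall_and]

lemma sum_sub_card_sub_one_le_prod {ι : Type*} (s : Finset ι) {x : ι → ℝ}
    (h0 : ∀ i ∈ s, 0 ≤ x i) (h1 : ∀ i ∈ s, x i ≤ 1) : ∑ i ∈ s, x i - (#s - 1) ≤ ∏ i ∈ s, x i := by
  classical
  induction s using Finset.induction with
  | empty => simp
  | insert a s ha ih =>
    simp only [mem_insert, forall_eq_or_imp] at h0 h1
    rw [sum_insert ha, prod_insert ha, card_insert_of_notMem ha, Nat.cast_succ]
    have hprod_le : ∏ i ∈ s, x i ≤ 1 := prod_le_one h0.2 h1.2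
    nlinarith [ih h0.2 h1.2, prod_nonneg h0.2]

lemma lineMap_one_apply {ι : Type*} (x : ι → ℝ) (c : ℝ) (i : ι) :
    AffineMap.lineMap (1 : ι → ℝ) x c i = 1 - c * (1 - x i) := by
  simp [AffineMap.lineMap_apply_module]; ring

lemma lineMap_one_mem_Icc {ι : Type*} {x : ι → ℝ} (hx : x ∈ Set.Icc 0 1) {j : ι}
    (hj : ∀ i, 1 - x i ≤ 1 - x j) {c : ℝ} (hc0 : 0 ≤ c) (hc : c * (1 - x j) ≤ 1) :
    AffineMap.lineMap (1 : ι → ℝ) x c ∈ Set.Icc 0 1 := by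
  refine mem_Icc_zero_one_iff.2 fun i => ?_
  have hxi := mem_Icc_zero_one_iff.1 hx i
  have : c * (1 - x i) ≤ 1 := (mul_le_mul_of_nonneg_left (hj i) hc0).trans hc
  rw [lineMap_one_apply]
  constructor <;> nlinarith

lemma pow_sub_pow_le_mul_sub {a b : ℝ} (ha : 0 ≤ a) (hab : a ≤ b) (hb : b ≤ 1) (n : ℕ) :
    b ^ n - a ^ n ≤ n * (b - a) := by
  induction n with
  | zero => simp
  | succ n ih =>
    have hgap : 0 ≤ b ^ n - a ^ n := sub_nonneg.2 (pow_le_pow_left₀ ha hab n)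
    have han : a ^ n ≤ 1 := pow_le_one₀ ha (hab.trans hb)
    calc b ^ (n + 1) - a ^ (n + 1) = b * (b ^ n - a ^ n) + a ^ n * (b - a) := by ring
      _ ≤ 1 * (n * (b - a)) + 1 * (b - a) := by gcongr
      _ = (n + 1 : ℕ) * (b - a) := by push_cast; ring

lemma div_pow_sub_max_le {n : ℕ} (hn : 0 < n) {t : ℝ} (ht0 : 0 ≤ t) (ht : t ≤ n) :
    (t / n) ^ n - max (t - (n - 1)) 0 ≤ ((n - 1) / n) ^ n := by
  have hn' : (0 : ℝ) < n := Nat.cast_pos.2 hn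
  rcases le_total t (n - 1) with h | h
  · have := pow_le_pow_left₀ (by positivity) (div_le_div_of_nonneg_right h hn'.le) n
    linarith [le_max_right (t - (n - 1)) 0]
  · have := pow_sub_pow_le_mul_sub (div_nonneg (sub_nonneg.2 (Nat.one_le_cast.2 hn)) hn'.le)
      (div_le_div_of_nonneg_right h hn'.le) ((div_le_one hn').2 ht) n
    rw [max_eq_left (by linarith)]
    have : (n : ℝ) * (t / n - (n - 1) / n) = t - (n - 1) := by field_simp
    linarith

section Cube

variable {ι : Type*} [Fintype ι]

lemma sum_smul_one_sub_single [DecidableEq ι] {w : ι → ℝ} (hw : ∑ i, w i = 1) :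
    ∑ i, w i • (1 - Pi.single i 1 : ι → ℝ) = 1 - w := by
  simp_rw [smul_sub, sum_sub_distrib, ← sum_smul, hw, one_smul, ← Pi.single_smul', smul_eq_mul,
    mul_one, univ_sum_single]

lemma convexOn_max_sum_sub_s17 (c : ℝ) :
    ConvexOn ℝ Set.univ (fun x : ι → ℝ => max (∑ i, x i - c) 0) := by
  have hsum : ConvexOn ℝ Set.univ (fun x : ι → ℝ => ∑ i, x i - c) :=
    (((∑ i, LinearMap.proj i : (ι → ℝ) →ₗ[ℝ] ℝ).convexOn convex_univ).add_const (-c)).congr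
      fun x _ => by simp [sub_eq_add_neg]
  exact hsum.sup (convexOn_const 0 convex_univ)

variable {h : (ι → ℝ) → ℝ}

theorem ConvexOn.le_zero_of_sum_one_sub_eq_one (hh : ConvexOn ℝ (Set.Icc 0 1) h)
    (hface : ∀ v ∈ Set.Icc (0 : ι → ℝ) 1, (∃ i, v i = 0) → h v ≤ 0) {y : ι → ℝ}
    (hy : y ∈ Set.Icc 0 1) (hsum : ∑ i, (1 - y i) = 1) : h y ≤ 0 := by
  classical
  have hvertex : ∀ i, (1 - Pi.single i 1 : ι → ℝ) ∈ Set.Icc 0 1 := fun i =>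
    mem_Icc_zero_one_iff.2 fun k => by
      rcases eq_or_ne k i with rfl | hk <;> simp [*]
  have hw : ∀ i ∈ univ, 0 ≤ 1 - y i := fun i _ => sub_nonneg.2 (mem_Icc_zero_one_iff.1 hy i).2
  calc h y = h (∑ i, (1 - y i) • (1 - Pi.single i 1 : ι → ℝ)) := by
        rw [sum_smul_one_sub_single hsum]; congr; ext; simp
    _ ≤ ∑ i, (1 - y i) • h (1 - Pi.single i 1) := hh.map_sum_le hw hsum fun i _ => hvertex i
    _ ≤ 0 := sum_nonpos fun i hi =>
        smul_nonpos_of_nonneg_of_nonpos (hw i hi) (hface _ (hvertex i) ⟨i, by simp⟩)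

theorem ConvexOn.le_max_sum_sub_card_sub_one (hh : ConvexOn ℝ (Set.Icc 0 1) h)
    (hface : ∀ v ∈ Set.Icc (0 : ι → ℝ) 1, (∃ i, v i = 0) → h v ≤ 0) (hone : h 1 ≤ 1)
    {x : ι → ℝ} (hx : x ∈ Set.Icc 0 1) :
    h x ≤ max (∑ i, x i - (Fintype.card ι - 1)) 0 := by
  by_cases hx1 : x = 1
  · subst hx1; simpa using hone
  obtain ⟨i₀, hi₀⟩ : ∃ i, x i ≠ 1 := by
    by_contra! hall; exact hx1 (funext hall)
  obtain ⟨j, -, hj⟩ := exists_max_image univ (fun i => 1 - x i) ⟨i₀, mem_univ _⟩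
  set s := ∑ i, (1 - x i)
  have hxj : 0 < 1 - x j :=
    (sub_pos.2 ((mem_Icc_zero_one_iff.1 hx i₀).2.lt_of_ne hi₀)).trans_le (hj i₀ (mem_univ _))
  have hjs : 1 - x j ≤ s :=
    single_le_sum (fun k _ => sub_nonneg.2 (mem_Icc_zero_one_iff.1 hx k).2) (mem_univ j)
  have hs0 : 0 < s := hxj.trans_le hjs
  set ℓ := AffineMap.lineMap (k := ℝ) (1 : ι → ℝ) x
  have hmem : ∀ c, 0 ≤ c → c * (1 - x j) ≤ 1 → ℓ c ∈ Set.Icc 0 1 := fun c hc0 hc =>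
    lineMap_one_mem_Icc hx (fun i => hj i (mem_univ i)) hc0 hc
  have hmem_s : ℓ s⁻¹ ∈ Set.Icc 0 1 := hmem _ (by positivity) (inv_mul_le_one_of_le₀ hjs hs0.le)
  have hmem_j : ℓ (1 - x j)⁻¹ ∈ Set.Icc 0 1 :=
    hmem _ (by positivity) (inv_mul_cancel₀ hxj.ne').le
  have hy : h (ℓ s⁻¹) ≤ 0 := by
    refine hh.le_zero_of_sum_one_sub_eq_one hface hmem_s ?_
    simp_rw [ℓ, lineMap_one_apply, sub_sub_cancel, ← mul_sum]
    exact inv_mul_cancel₀ hs0.ne'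
  have hz : h (ℓ (1 - x j)⁻¹) ≤ 0 :=
    hface _ hmem_j ⟨j, by rw [lineMap_one_apply, inv_mul_cancel₀ hxj.ne', sub_self]⟩
  have hφ : ConvexOn ℝ (ℓ ⁻¹' Set.Icc 0 1) (h ∘ ℓ) := hh.comp_affineMap ℓ
  have hℓ1 : ℓ 1 = x := AffineMap.lineMap_apply_one _ _
  rw [show ∑ i, x i - (Fintype.card ι - 1) = 1 - s by simp [s, sum_sub_distrib]; ring]
  rcases le_total s 1 with hs1 | hs1
  · have := hφ.2 (hmem 0 le_rfl (by simp)) hmem_s (by linarith : 0 ≤ 1 - s) hs0.le (by ring)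
    simp only [Function.comp, smul_eq_mul, mul_zero, zero_add, mul_inv_cancel₀ hs0.ne', hℓ1,
      ℓ, AffineMap.lineMap_apply_zero] at this
    exact le_max_of_le_left (by nlinarith)
  · have hseg : (1 : ℝ) ∈ segment ℝ s⁻¹ (1 - x j)⁻¹ := by
      rw [segment_eq_Icc (inv_anti₀ hxj hjs)]
      have hxj1 : 1 - x j ≤ 1 := by linarith [(mem_Icc_zero_one_iff.1 hx j).1]
      exact ⟨inv_le_one_of_one_le₀ hs1, (one_le_inv₀ hxj).2 hxj1⟩
    have := hφ.le_on_segment hmem_s hmem_j hseg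
    rw [Function.comp_apply, hℓ1] at this
    exact le_max_of_le_right (this.trans (max_le hy hz))

theorem isConvexEnvelopeOn_prod :
    IsConvexEnvelopeOn (Set.Icc (0 : ι → ℝ) 1) (fun x => ∏ i, x i)
      (fun x => max (∑ i, x i - (Fintype.card ι - 1)) 0) := by
  rw [IsConvexEnvelopeOn, (convex_Icc (0 : ι → ℝ) 1).convexHull_eq]
  refine ⟨(convexOn_max_sum_sub_s17 _).subset (Set.subset_univ _) (convex_Icc 0 1),
    (by fun_prop : Continuous _).lowerSemicontinuous.lowerSemicontinuousOn _,
    fun x hx => ?_, fun h hh _ hle x hx => ?_⟩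
  · have h0 i (_ : i ∈ univ) := (mem_Icc_zero_one_iff.1 hx i).1
    have h1 i (_ : i ∈ univ) := (mem_Icc_zero_one_iff.1 hx i).2
    exact max_le (by simpa using sum_sub_card_sub_one_le_prod univ h0 h1) (prod_nonneg h0)
  · refine hh.le_max_sum_sub_card_sub_one (fun v hv ⟨i, hi⟩ => ?_) ?_ hx
    · simpa [prod_eq_zero (mem_univ i) hi] using hle v hv
    · simpa using hle 1 (Set.right_mem_Icc.2 zero_le_one)

lemma prod_le_mean_pow [Nonempty ι] {x : ι → ℝ} (hx : ∀ i, 0 ≤ x i) :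
    ∏ i, x i ≤ ((∑ i, x i) / Fintype.card ι) ^ Fintype.card ι := by
  have hamgm := Real.geom_mean_le_arith_mean univ (fun _ => 1) x (by simp)
    (by simp [Fintype.card_pos]) fun i _ => hx i
  simp only [Real.rpow_one, one_mul, sum_const, card_univ, nsmul_eq_mul, mul_one] at hamgm
  calc ∏ i, x i = ((∏ i, x i) ^ ((Fintype.card ι : ℝ)⁻¹)) ^ Fintype.card ι :=
        (Real.rpow_inv_natCast_pow (prod_nonneg fun i _ => hx i) Fintype.card_ne_zero).symm
    _ ≤ _ := pow_le_pow_left₀ (Real.rpow_nonneg (prod_nonneg fun i _ => hx i) _) hamgm _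

theorem sSup_prod_sub_max_sum_sub [Nonempty ι] :
    sSup ((fun x : ι → ℝ => (∏ i, x i) - max (∑ i, x i - (Fintype.card ι - 1)) 0) ''
      Set.Icc 0 1) = ((Fintype.card ι - 1) / Fintype.card ι) ^ Fintype.card ι := by
  set n := Fintype.card ι
  have hn : 0 < n := Fintype.card_pos
  have hn' : (0 : ℝ) < n := Nat.cast_pos.2 hn
  set c : ℝ := (n - 1) / n
  refine IsGreatest.csSup_eq ⟨⟨fun _ => c, mem_Icc_zero_one_iff.2 fun _ => ⟨?_, ?_⟩, ?_⟩, ?_⟩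
  · exact div_nonneg (sub_nonneg.2 (Nat.one_le_cast.2 hn)) hn'.le
  · exact (div_le_one hn').2 (by linarith)
  · have : ∑ _i : ι, c = n - 1 := by simp [c, n]; field_simp
    simp [this, n]
  · rintro _ ⟨x, hx, rfl⟩
    have hx0 i := (mem_Icc_zero_one_iff.1 hx i).1
    have hsum_le : ∑ i, x i ≤ n := by
      simpa [n] using sum_le_sum fun i (_ : i ∈ univ) => (mem_Icc_zero_one_iff.1 hx i).2
    have := div_pow_sub_max_le hn (sum_nonneg fun i _ => hx0 i) hsum_le
    have := prod_le_mean_pow hx0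
    dsimp only
    linarith

end Cube

/-- the convex envelope of `∏ xᵢ` on `[0,1]ⁿ` is `max(Σ xᵢ − (n−1), 0)`,
with nonconvexity `((n−1)/n)ⁿ`. -/
theorem envelope_prod_n (n : ℕ) (hn : 0 < n) :
    IsConvexEnvelopeOn (Set.Icc (0 : Fin n → ℝ) 1)
      (fun x => ∏ i, x i) (fun x => max (∑ i, x i - (n - 1)) 0) ∧
    sSup ((fun x : Fin n → ℝ => (∏ i, x i) - max (∑ i, x i - (n - 1)) 0) ''
      Set.Icc (0 : Fin n → ℝ) 1) = ((n - 1) / n) ^ n := by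
  have : Nonempty (Fin n) := ⟨⟨0, hn⟩⟩
  have henv := isConvexEnvelopeOn_prod (ι := Fin n)
  have hsup := sSup_prod_sub_max_sum_sub (ι := Fin n)
  rw [Fintype.card_fin] at henv hsup
  exact ⟨henv, hsup⟩
end
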